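/- arXiv:2601.14167 — 9 statements merged into one kernel-verified Lean document; each statement's English description precedes it below -/
import Mathlib

section
/- A concave function f : E → ℝ is globally Lipschitz if and only if there exists C > 0 such that |f(x)| ≤ C(1 + ‖x‖) for all x ∈ E. -/
open Set

noncomputable section

/-- `f` is globally Lipschitz: `|f x - f y| ≤ C * ‖x - y‖` for some `C ≥ 0`. -/
def GloballyLipschitz (d : ℕ) (f : EuclideanSpace ℝ (Fin d) → ℝ) : Prop :=
  ∃ C : ℝ, 0 ≤ C ∧ ∀ x y, |f x - f y| ≤ C * ‖x - y‖

lemma aux_concave_lip (d : ℕ) (f : EuclideanSpace ℝ (Fin d) → ℝ)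
    (hf : ConcaveOn ℝ Set.univ f) (C : ℝ) (hC : 0 < C)
    (h : ∀ x, |f x| ≤ C * (1 + ‖x‖)) (x y : EuclideanSpace ℝ (Fin d)) :
    f x - f y ≤ C * ‖x - y‖ := by
  apply le_of_forall_pos_le_add
  intro ε hε
  set t : ℝ := C * (2 + 2 * ‖x‖) / ε with ht
  have ht0 : 0 < t := div_pos (by positivity) hε
  have h1t : 0 < 1 + t := by linarith
  set lam : ℝ := 1 / (1 + t) with hlam
  have hlam0 : 0 < lam := by positivity
  have hkey : lam * (1 + t) = 1 := by rw [hlam]; field_simp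
  set z := x + (1 + t) • (y - x) with hz
  have hy : (1 - lam) • x + lam • z = y := by
    rw [hz, smul_add, smul_smul, hkey, one_smul]
    module
  have hc := hf.2 (mem_univ x) (mem_univ z)
    (by have : lam ≤ 1 := by rw [hlam, div_le_one h1t]; linarith
        linarith : (0:ℝ) ≤ 1 - lam) hlam0.le (by ring)
  rw [hy] at hc
  simp only [smul_eq_mul] at hc
  -- f x - f y ≤ lam * (f x - f z)
  have h1 : f x - f y ≤ lam * (f x - f z) := by nlinarith
  have hzx : ‖z‖ ≤ ‖x‖ + (1 + t) * ‖x - y‖ := by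
    calc ‖z‖ ≤ ‖x‖ + ‖(1 + t) • (y - x)‖ := norm_add_le _ _
    _ = ‖x‖ + (1 + t) * ‖x - y‖ := by
        rw [norm_smul, Real.norm_eq_abs, abs_of_pos h1t, norm_sub_rev]
  have hfx := h x
  have hfz := h z
  have h2 : f x - f z ≤ |f x| + |f z| := by
    have := abs_sub_abs_le_abs_sub (f x) (f z)
    have := abs_sub (f x) (f z)
    cases abs_cases (f x) with
    | inl hx => cases abs_cases (f z) with
      | inl hz' => linarith
      | inr hz' => linarith
    | inr hx => cases abs_cases (f z) with
      | inl hz' => linarith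
      | inr hz' => linarith
  have h3 : f x - f z ≤ C * (2 + 2 * ‖x‖) + C * (1 + t) * ‖x - y‖ := by
    have hz0 : 0 ≤ ‖z‖ := norm_nonneg _
    nlinarith [norm_nonneg x, norm_nonneg (x - y)]
  have h4 : lam * (f x - f z) ≤ lam * (C * (2 + 2 * ‖x‖)) + C * ‖x - y‖ := by
    have := mul_le_mul_of_nonneg_left h3 hlam0.le
    have e : lam * (C * (1 + t) * ‖x - y‖) = C * ‖x - y‖ := by
      rw [hlam]
      field_simp
    nlinarith
  have h5 : lam * (C * (2 + 2 * ‖x‖)) ≤ ε := by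
    rw [hlam]
    rw [div_mul_eq_mul_div, one_mul, div_le_iff₀ h1t]
    have : C * (2 + 2 * ‖x‖) = t * ε := by rw [ht]; field_simp
    nlinarith
  linarith

/-- A concave function `f : E → ℝ` is globally Lipschitz iff there is `C > 0` with
`|f x| ≤ C (1 + ‖x‖)` for all `x`. -/
theorem stmt_1 (d : ℕ) (hd : 1 ≤ d) (f : EuclideanSpace ℝ (Fin d) → ℝ)
    (hf : ConcaveOn ℝ Set.univ f) :
    GloballyLipschitz d f ↔ ∃ C : ℝ, 0 < C ∧ ∀ x, |f x| ≤ C * (1 + ‖x‖) := by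
  constructor
  · rintro ⟨C, hC0, hlip⟩
    refine ⟨|f 0| + C + 1, by positivity, fun x => ?_⟩
    have h1 : |f x - f 0| ≤ C * ‖x - 0‖ := hlip x 0
    rw [sub_zero] at h1
    have h2 : |f x| ≤ |f x - f 0| + |f 0| := by
      calc |f x| = |f x - f 0 + f 0| := by ring_nf
      _ ≤ |f x - f 0| + |f 0| := abs_add_le _ _
    have hx := norm_nonneg x
    have ha := abs_nonneg (f 0)
    nlinarith
  · rintro ⟨C, hC, h⟩
    refine ⟨C, hC.le, fun x y => ?_⟩
    rw [abs_sub_le_iff]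
    refine ⟨aux_concave_lip d f hf C hC h x y, ?_⟩
    rw [norm_sub_rev]
    exact aux_concave_lip d f hf C hC h y x
end
end

section
/- Let K and K_n (n ∈ ℕ) be nonempty compact convex subsets of E such that K has nonempty interior and d_H(K_n, K) → 0. Then for every ε > 0 there exists n_ε such that for all n ≥ n_ε, the set conv{ y ∈ K : dist(y, frontier K) ≥ ε } is contained in K_n. -/
/-!
Let `y ∈ K` lie at distance `δ` from `frontier K`, with `d_H(Kₙ, K) < δ`, and suppose `y ∉ Kₙ`.
Separating `y` from the closed convex set `Kₙ` by a unit normal `w` and choosing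
`d_H(Kₙ, K) < r < δ`, the point `y + r • w` still lies in `K` (the open `δ`-ball around `y`
misses `frontier K`, so it stays inside `K`), yet it is farther than `r` from every point of
`Kₙ`: this contradicts the Hausdorff bound. Convexity of `Kₙ` then absorbs the convex hull.
-/

open Metric
open scoped RealInnerProductSpace

theorem IsPreconnected.subset_interior_of_disjoint_frontier {X : Type*} [TopologicalSpace X]
    {s K : Set X} (hs : IsPreconnected s) (hsK : (s ∩ K).Nonempty)
    (hdisj : Disjoint s (frontier K)) : s ⊆ interior K := by
  have hmem : ∀ x ∈ s, x ∈ closure K → x ∈ interior K := fun x hxs hxK => by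
    rw [← closure_sdiff_frontier]
    exact ⟨hxK, hdisj.notMem_of_mem_left hxs⟩
  obtain ⟨x, hxs, hxK⟩ := hsK
  refine hs.subset_of_closure_inter_subset isOpen_interior
    ⟨x, hxs, hmem x hxs (subset_closure hxK)⟩ ?_
  rintro z ⟨hzK, hzs⟩
  exact hmem z hzs (closure_mono interior_subset hzK)

theorem ball_infDist_frontier_subset_interior {E : Type*} [SeminormedAddCommGroup E]
    [NormedSpace ℝ E] {K : Set E} {y : E} (hy : y ∈ K) :
    ball y (infDist y (frontier K)) ⊆ interior K := by
  rcases (ball y (infDist y (frontier K))).eq_empty_or_nonempty with hempty | hne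
  · simp [hempty]
  exact (convex_ball _ _).isPreconnected.subset_interior_of_disjoint_frontier
    ⟨y, mem_ball_self (nonempty_ball.1 hne), hy⟩ disjoint_ball_infDist

section Separation

variable {F : Type*} [NormedAddCommGroup F] [InnerProductSpace ℝ F] [CompleteSpace F]
  {C : Set F} {y : F}

theorem Convex.exists_unit_inner_lt_of_notMem (hCv : Convex ℝ C) (hCc : IsClosed C)
    (hCne : C.Nonempty) (hy : y ∉ C) :
    ∃ w : F, ‖w‖ = 1 ∧ ∀ a ∈ C, ⟪w, a⟫ < ⟪w, y⟫ := by
  obtain ⟨f, c, hfC, hfy⟩ := geometric_hahn_banach_closed_point hCv hCc hy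
  set u := (InnerProductSpace.toDual ℝ F).symm f
  have hu : ∀ x, ⟪u, x⟫ = f x := fun x => InnerProductSpace.toDual_symm_apply
  have hu0 : u ≠ 0 := by
    rintro hu0
    obtain ⟨a, ha⟩ := hCne
    have hfa := (hfC a ha).trans hfy
    rw [← hu, ← hu, hu0, inner_zero_left, inner_zero_left] at hfa
    exact lt_irrefl _ hfa
  refine ⟨‖u‖⁻¹ • u, norm_smul_inv_norm hu0, fun a ha => ?_⟩
  simp only [real_inner_smul_left, hu]
  exact mul_lt_mul_of_pos_left ((hfC a ha).trans hfy) (by positivity)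

theorem Convex.exists_dist_eq_forall_lt_dist (hCv : Convex ℝ C) (hCc : IsClosed C)
    (hCne : C.Nonempty) (hy : y ∉ C) {r : ℝ} (hr : 0 ≤ r) :
    ∃ z, dist z y = r ∧ ∀ a ∈ C, r < dist z a := by
  obtain ⟨w, hw, hwC⟩ := hCv.exists_unit_inner_lt_of_notMem hCc hCne hy
  refine ⟨y + r • w, by simp [dist_eq_norm, norm_smul, hw, abs_of_nonneg hr], fun a ha => ?_⟩
  calc r < ⟪w, y + r • w - a⟫ := by
        rw [inner_sub_right, inner_add_right, real_inner_smul_right, real_inner_self_eq_norm_sq,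
          hw]
        linarith [hwC a ha]
    _ ≤ ‖w‖ * ‖y + r • w - a‖ := real_inner_le_norm _ _
    _ = dist (y + r • w) a := by rw [hw, one_mul, dist_eq_norm]

theorem Convex.mem_of_hausdorffDist_lt_infDist_frontier (hCv : Convex ℝ C) (hCc : IsClosed C)
    (hCne : C.Nonempty) {K : Set F} (hfin : hausdorffEDist C K ≠ ⊤) (hy : y ∈ K)
    (h : hausdorffDist C K < infDist y (frontier K)) : y ∈ C := by
  by_contra hyC
  obtain ⟨r, hCr, hry⟩ := exists_between h
  obtain ⟨z, hzy, hzC⟩ :=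
    hCv.exists_dist_eq_forall_lt_dist hCc hCne hyC (hausdorffDist_nonneg.trans hCr.le)
  have hzK : z ∈ K :=
    interior_subset (ball_infDist_frontier_subset_interior hy (by rwa [mem_ball, hzy]))
  obtain ⟨a, haC, haz⟩ := exists_dist_lt_of_hausdorffDist_lt' hzK hCr hfin
  exact (hzC a haC).not_gt (by rwa [dist_comm])

end Separation

theorem stmt_3_general (d : ℕ)
    (K : Set (EuclideanSpace ℝ (Fin d))) (Kn : ℕ → Set (EuclideanSpace ℝ (Fin d)))
    (hK : K.Nonempty) (hKc : IsCompact K)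
    (hKn : ∀ n, (Kn n).Nonempty) (hKnc : ∀ n, IsCompact (Kn n))
    (hKnv : ∀ n, Convex ℝ (Kn n))
    (hconv : Filter.Tendsto (fun n => Metric.hausdorffDist (Kn n) K)
      Filter.atTop (nhds 0)) :
    ∀ ε : ℝ, 0 < ε → ∃ N : ℕ, ∀ n ≥ N,
      convexHull ℝ {y ∈ K | ε ≤ Metric.infDist y (frontier K)} ⊆ Kn n := by
  intro ε hε
  obtain ⟨N, hN⟩ := Filter.eventually_atTop.1 (hconv.eventually (gt_mem_nhds hε))
  refine ⟨N, fun n hn => convexHull_min (fun y hy => ?_) (hKnv n)⟩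
  have hfin : hausdorffEDist (Kn n) K ≠ ⊤ :=
    hausdorffEDist_ne_top_of_nonempty_of_bounded (hKn n) hK (hKnc n).isBounded hKc.isBounded
  exact (hKnv n).mem_of_hausdorffDist_lt_infDist_frontier (hKnc n).isClosed (hKn n) hfin hy.1
    ((hN n hn).trans_le hy.2)

/-- If `K` has nonempty interior and `K_n → K` in Hausdorff distance, then for every
`ε > 0` the inner parallel body `conv{y ∈ K | dist(y, frontier K) ≥ ε}` is eventually
contained in `K_n`. -/
theorem stmt_3 (d : ℕ) (hd : 1 ≤ d)
    (K : Set (EuclideanSpace ℝ (Fin d))) (Kn : ℕ → Set (EuclideanSpace ℝ (Fin d)))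
    (hK : K.Nonempty) (hKc : IsCompact K) (hKv : Convex ℝ K)
    (hKint : (interior K).Nonempty)
    (hKn : ∀ n, (Kn n).Nonempty) (hKnc : ∀ n, IsCompact (Kn n))
    (hKnv : ∀ n, Convex ℝ (Kn n))
    (hconv : Filter.Tendsto (fun n => Metric.hausdorffDist (Kn n) K)
      Filter.atTop (nhds 0)) :
    ∀ ε : ℝ, 0 < ε → ∃ N : ℕ, ∀ n ≥ N,
      convexHull ℝ {y ∈ K | ε ≤ Metric.infDist y (frontier K)} ⊆ Kn n :=
  stmt_3_general d K Kn hK hKc hKn hKnc hKnv hconv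
end

section
/- For each i = 1, …, d let Δ_i and Δ_{i,n} (n ∈ ℕ) be nonempty compact convex subsets of E with d_H(Δ_{i,n}, Δ_i) → 0 as n → ∞. Then the mixed volumes converge: MV(Δ_{1,n}, …, Δ_{d,n}) → MV(Δ_1, …, Δ_d) as n → ∞. -/
/-!
Each term of the inclusion–exclusion formula is the volume of a Minkowski sum, and the Hausdorff
distance is subadditive under Minkowski addition, so it suffices that volume is continuous under
Hausdorff convergence of convex bodies `L n → K`. Eventually `L n` lies in a small thickening of
`K`, whose volume is close to that of `K` since `K` is compact. Conversely, `L n` eventually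
contains each inner parallel body `{x | closedBall x ε ⊆ K}`: a point of it outside the convex set
`L n` can be pushed a further distance `ε` away from `L n` inside `K`. These inner bodies exhaust
`K` up to its frontier, which is null because `K` is convex.
-/

open Set MeasureTheory Pointwise

noncomputable section

/-- The mixed volume of `d` compact convex subsets of `ℝ^d`, defined by
inclusion–exclusion over Minkowski sums (the empty Minkowski sum is `{0}`). -/
noncomputable def mixedVol (d : ℕ) (Δ : Fin d → Set (EuclideanSpace ℝ (Fin d))) : ℝ :=
  ∑ I ∈ (Finset.univ : Finset (Fin d)).powerset,
    (-1 : ℝ) ^ (d - I.card) * (volume (∑ i ∈ I, Δ i)).toReal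

open Metric Filter Topology

section HausdorffMinkowski

variable {E : Type*} [SeminormedAddCommGroup E]

theorem infEDist_add_add_le (a b : E) (C D : Set E) :
    infEDist (a + b) (C + D) ≤ infEDist a C + infEDist b D := by
  simp only [infEDist, ENNReal.iInf_add, ENNReal.add_iInf]
  exact le_iInf₂ fun e he => le_iInf₂ fun c hc =>
    (infEDist_le_edist_of_mem (add_mem_add hc he)).trans (edist_add_add_le a b c e)

theorem hausdorffEDist_add_add_le (A B C D : Set E) :
    hausdorffEDist (A + B) (C + D) ≤ hausdorffEDist A C + hausdorffEDist B D := by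
  refine hausdorffEDist_le_of_infEDist ?_ ?_
  · rintro _ ⟨a, ha, b, hb, rfl⟩
    exact (infEDist_add_add_le a b C D).trans (add_le_add
      (infEDist_le_hausdorffEDist_of_mem ha) (infEDist_le_hausdorffEDist_of_mem hb))
  · rintro _ ⟨c, hc, e, he, rfl⟩
    rw [hausdorffEDist_comm (s := A), hausdorffEDist_comm (s := B)]
    exact (infEDist_add_add_le c e A B).trans (add_le_add
      (infEDist_le_hausdorffEDist_of_mem hc) (infEDist_le_hausdorffEDist_of_mem he))

theorem hausdorffEDist_sum_sum_le {ι : Type*} (I : Finset ι) (A B : ι → Set E) :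
    hausdorffEDist (∑ i ∈ I, A i) (∑ i ∈ I, B i) ≤ ∑ i ∈ I, hausdorffEDist (A i) (B i) := by
  classical
  induction I using Finset.induction_on with
  | empty => simp
  | insert a I ha ih =>
    simp only [Finset.sum_insert ha]
    exact (hausdorffEDist_add_add_le _ _ _ _).trans (add_le_add le_rfl ih)

theorem hausdorffDist_sum_sum_le {ι : Type*} {I : Finset ι} {A B : ι → Set E}
    (h : ∀ i ∈ I, hausdorffEDist (A i) (B i) ≠ ⊤) :
    hausdorffDist (∑ i ∈ I, A i) (∑ i ∈ I, B i) ≤ ∑ i ∈ I, hausdorffDist (A i) (B i) := by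
  unfold hausdorffDist
  rw [← ENNReal.toReal_sum h]
  exact ENNReal.toReal_mono (ENNReal.sum_ne_top.2 h) (hausdorffEDist_sum_sum_le I A B)

end HausdorffMinkowski

theorem subset_thickening_of_hausdorffDist_lt {X : Type*} [PseudoMetricSpace X] {s t : Set X}
    {r : ℝ} (hfin : hausdorffEDist s t ≠ ⊤) (h : hausdorffDist s t < r) : s ⊆ thickening r t :=
  fun _ hx => mem_thickening_iff.2 (exists_dist_lt_of_hausdorffDist_lt hx h hfin)

section ConvexBody

variable {E : Type*} [NormedAddCommGroup E] [NormedSpace ℝ E]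

structure IsConvexBody (K : Set E) : Prop where
  nonempty : K.Nonempty
  isCompact : IsCompact K
  convex : Convex ℝ K

theorem isConvexBody_zero : IsConvexBody (0 : Set E) :=
  ⟨zero_nonempty, by simp, convex_zero⟩

theorem IsConvexBody.add {K L : Set E} (hK : IsConvexBody K) (hL : IsConvexBody L) :
    IsConvexBody (K + L) :=
  ⟨hK.nonempty.add hL.nonempty, hK.isCompact.add hL.isCompact, hK.convex.add hL.convex⟩

theorem isConvexBody_sum {ι : Type*} {I : Finset ι} {K : ι → Set E}
    (h : ∀ i ∈ I, IsConvexBody (K i)) : IsConvexBody (∑ i ∈ I, K i) :=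
  Finset.sum_induction _ IsConvexBody (fun _ _ => IsConvexBody.add) isConvexBody_zero h

theorem IsConvexBody.hausdorffEDist_ne_top {K L : Set E} (hK : IsConvexBody K)
    (hL : IsConvexBody L) : hausdorffEDist K L ≠ ⊤ :=
  hausdorffEDist_ne_top_of_nonempty_of_bounded hK.nonempty hL.nonempty
    hK.isCompact.isBounded hL.isCompact.isBounded

end ConvexBody


section Separation

variable {E : Type*} [NormedAddCommGroup E] [InnerProductSpace ℝ E]

theorem Convex.mem_of_closedBall_subset_thickening {L : Set E} (hL : Convex ℝ L)
    (hLc : IsCompact L) {x : E} {ε : ℝ} (hε : 0 ≤ ε) (h : closedBall x ε ⊆ Metric.thickening ε L) :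
    x ∈ L := by
  obtain ⟨z, hzL, -⟩ := mem_thickening_iff.1 (h (mem_closedBall_self hε))
  obtain ⟨p, hpL, hp⟩ := hLc.exists_infDist_eq_dist ⟨z, hzL⟩ x
  by_contra hx
  set v := x - p
  have hv : 0 < ‖v‖ := norm_pos_iff.2 (sub_ne_zero.2 fun h => hx (h ▸ hpL))
  have hobtuse : ∀ y ∈ L, inner ℝ v (y - p) ≤ 0 := by
    refine (norm_eq_iInf_iff_real_inner_le_zero hL hpL).1 ?_
    rw [← dist_eq_norm, ← hp, infDist_eq_iInf]
    simp_rw [dist_eq_norm]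
  -- `q` is pushed along the outer normal `v` at the nearest point `p`, so `ε < infDist q L`
  set q := x + (ε / ‖v‖) • v
  have hq : q ∈ closedBall x ε := by
    rw [mem_closedBall, dist_eq_norm, add_sub_cancel_left, norm_smul, Real.norm_eq_abs,
      abs_of_nonneg (by positivity), div_mul_cancel₀ _ hv.ne']
  obtain ⟨y, hyL, hqy⟩ := mem_thickening_iff.1 (h hq)
  have : ‖v‖ * (‖v‖ + ε) ≤ ‖v‖ * dist q y :=
    calc ‖v‖ * (‖v‖ + ε) = inner ℝ v (q - p) := by
          rw [show q - p = (1 + ε / ‖v‖) • v by simp only [q, v]; module, real_inner_smul_right,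
            real_inner_self_eq_norm_mul_norm]
          field_simp
      _ ≤ inner ℝ v (q - p) - inner ℝ v (y - p) := by linarith [hobtuse y hyL]
      _ = inner ℝ v (q - y) := by rw [← inner_sub_right, sub_sub_sub_cancel_right]
      _ ≤ ‖v‖ * dist q y := by rw [dist_eq_norm]; exact real_inner_le_norm _ _
  linarith [le_of_mul_le_mul_left this hv]

section InnerParallelBody

variable {X : Type*} [PseudoMetricSpace X]

def innerParallelBody (K : Set X) (ε : ℝ) : Set X := {x | closedBall x ε ⊆ K}

theorem innerParallelBody_anti (K : Set X) : Antitone (innerParallelBody K) :=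
  fun _ _ h _ hx => (closedBall_subset_closedBall h).trans hx

theorem interior_subset_iUnion_innerParallelBody (K : Set X) :
    interior K ⊆ ⋃ m : ℕ, innerParallelBody K (1 / (m + 1)) := by
  intro x hx
  obtain ⟨r, hr, hball⟩ := isOpen_iff.1 isOpen_interior x hx
  obtain ⟨m, hm⟩ := exists_nat_one_div_lt hr
  exact mem_iUnion.2 ⟨m, (closedBall_subset_ball hm).trans (hball.trans interior_subset)⟩

theorem exists_lt_measure_innerParallelBody [MeasurableSpace X] [OpensMeasurableSpace X]
    {μ : Measure X} {K : Set X} (hK : μ (frontier K) = 0) {a : ENNReal} (ha : a < μ K) :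
    ∃ ε > 0, a < μ (innerParallelBody K ε) := by
  have hmono : Monotone fun m : ℕ => innerParallelBody K (1 / (m + 1)) :=
    fun m m' h => innerParallelBody_anti K (by gcongr)
  have : μ K ≤ ⨆ m : ℕ, μ (innerParallelBody K (1 / (m + 1))) :=
    calc μ K = μ (interior K) := (measure_interior_of_null_frontier hK).symm
      _ ≤ μ (⋃ m : ℕ, innerParallelBody K (1 / (m + 1))) :=
        measure_mono (interior_subset_iUnion_innerParallelBody K)
      _ = ⨆ m : ℕ, μ (innerParallelBody K (1 / (m + 1))) := hmono.measure_iUnion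
  obtain ⟨m, hm⟩ := lt_iSup_iff.1 (ha.trans_le this)
  exact ⟨_, by positivity, hm⟩

end InnerParallelBody

section Volume

variable {E : Type*} [NormedAddCommGroup E] [InnerProductSpace ℝ E] [FiniteDimensional ℝ E]
  [MeasurableSpace E] [BorelSpace E] (μ : Measure E) [μ.IsAddHaarMeasure]

theorem tendsto_measure_of_tendsto_hausdorffDist {ι : Type*} {l : Filter ι} {K : Set E}
    {L : ι → Set E} (hK : IsConvexBody K) (hL : ∀ n, IsConvexBody (L n))
    (h : Tendsto (fun n => hausdorffDist (L n) K) l (𝓝 0)) :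
    Tendsto (fun n => μ (L n)) l (𝓝 (μ K)) := by
  have hclose : ∀ ε > 0, ∀ᶠ n in l, hausdorffDist (L n) K < ε :=
    fun ε hε => h.eventually (gt_mem_nhds hε)
  refine tendsto_order.2 ⟨fun a ha => ?_, fun b hb => ?_⟩
  · obtain ⟨ε, hε, haε⟩ := exists_lt_measure_innerParallelBody (hK.convex.addHaar_frontier μ) ha
    filter_upwards [hclose ε hε] with n hn
    rw [hausdorffDist_comm] at hn
    have hK_sub := subset_thickening_of_hausdorffDist_lt (hK.hausdorffEDist_ne_top (hL n)) hn
    exact haε.trans_le (measure_mono fun x hx =>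
      (hL n).convex.mem_of_closedBall_subset_thickening (hL n).isCompact hε.le (hx.trans hK_sub))
  · obtain ⟨ε, hεb, hε⟩ : ∃ ε, μ (cthickening ε K) < b ∧ 0 < ε :=
      ((((tendsto_measure_cthickening_of_isCompact hK.isCompact).eventually
        (gt_mem_nhds hb)).filter_mono (nhdsWithin_le_nhds (s := Ioi 0))).and self_mem_nhdsWithin).exists
    filter_upwards [hclose ε hε] with n hn
    have hL_sub := subset_thickening_of_hausdorffDist_lt ((hL n).hausdorffEDist_ne_top hK) hn
    exact (measure_mono (hL_sub.trans (thickening_subset_cthickening _ _))).trans_lt hεb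

end Volume

theorem stmt_6_general (d : ℕ)
    (Δ : Fin d → Set (EuclideanSpace ℝ (Fin d)))
    (Δn : ℕ → Fin d → Set (EuclideanSpace ℝ (Fin d)))
    (hΔ : ∀ i, (Δ i).Nonempty ∧ IsCompact (Δ i) ∧ Convex ℝ (Δ i))
    (hΔn : ∀ n i, (Δn n i).Nonempty ∧ IsCompact (Δn n i) ∧ Convex ℝ (Δn n i))
    (hconv : ∀ i, Filter.Tendsto (fun n => Metric.hausdorffDist (Δn n i) (Δ i))
      Filter.atTop (nhds 0)) :
    Filter.Tendsto (fun n => mixedVol d (Δn n)) Filter.atTop (nhds (mixedVol d Δ)) := by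
  have hbody : ∀ i, IsConvexBody (Δ i) := fun i => ⟨(hΔ i).1, (hΔ i).2.1, (hΔ i).2.2⟩
  have hbodyn : ∀ n i, IsConvexBody (Δn n i) :=
    fun n i => ⟨(hΔn n i).1, (hΔn n i).2.1, (hΔn n i).2.2⟩
  unfold mixedVol
  refine tendsto_finsetSum _ fun I _ => ((ENNReal.tendsto_toReal ?_).comp ?_).const_mul _
  · exact (isConvexBody_sum fun i _ => hbody i).isCompact.measure_ne_top
  have hsum : Tendsto (fun n => hausdorffDist (∑ i ∈ I, Δn n i) (∑ i ∈ I, Δ i)) atTop (𝓝 0) :=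
    squeeze_zero (fun n => hausdorffDist_nonneg)
      (fun n => hausdorffDist_sum_sum_le fun i _ => (hbodyn n i).hausdorffEDist_ne_top (hbody i))
      (by simpa using tendsto_finsetSum I fun i _ => hconv i)
  exact tendsto_measure_of_tendsto_hausdorffDist volume (isConvexBody_sum fun i _ => hbody i)
    (fun n => isConvexBody_sum fun i _ => hbodyn n i) hsum

/-- Mixed volumes are continuous with respect to Hausdorff convergence of the bodies. -/
theorem stmt_6 (d : ℕ) (hd : 1 ≤ d)
    (Δ : Fin d → Set (EuclideanSpace ℝ (Fin d)))
    (Δn : ℕ → Fin d → Set (EuclideanSpace ℝ (Fin d)))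
    (hΔ : ∀ i, (Δ i).Nonempty ∧ IsCompact (Δ i) ∧ Convex ℝ (Δ i))
    (hΔn : ∀ n i, (Δn n i).Nonempty ∧ IsCompact (Δn n i) ∧ Convex ℝ (Δn n i))
    (hconv : ∀ i, Filter.Tendsto (fun n => Metric.hausdorffDist (Δn n i) (Δ i))
      Filter.atTop (nhds 0)) :
    Filter.Tendsto (fun n => mixedVol d (Δn n)) Filter.atTop (nhds (mixedVol d Δ)) :=
  stmt_6_general d Δ Δn hΔ hΔn hconv
end Separation
end
end

section
/- A concave function f : E → ℝ is globally Lipschitz if and only if f can be written as f = f₀ + Ψ where f₀ : E → ℝ is continuous and sublinear and Ψ : E → ℝ is continuous and conical. -/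
open Set Pointwise

noncomputable section

/-- `f` is conical: positively homogeneous of degree 1. -/
def Conical (d : ℕ) (f : EuclideanSpace ℝ (Fin d) → ℝ) : Prop :=
  ∀ c : ℝ, 0 ≤ c → ∀ x, f (c • x) = c * f x

/-- `f` is sublinear: `f(x) = o(1 + ‖x‖)` as `‖x‖ → ∞`. -/
def Sublinear (d : ℕ) (f : EuclideanSpace ℝ (Fin d) → ℝ) : Prop :=
  ∀ ε : ℝ, 0 < ε → ∃ R : ℝ, 0 < R ∧ ∀ x, R ≤ ‖x‖ → |f x| ≤ ε * (1 + ‖x‖)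

/-- Slope monotonicity for concave functions along rays. -/
lemma aux_slope_anti {d : ℕ} (f : EuclideanSpace ℝ (Fin d) → ℝ)
    (hf : ConcaveOn ℝ Set.univ f) (x : EuclideanSpace ℝ (Fin d)) {s t : ℝ}
    (hs : 0 < s) (hst : s ≤ t) :
    (f (t • x) - f 0) / t ≤ (f (s • x) - f 0) / s := by
  have ht : 0 < t := hs.trans_le hst
  have ha : (0:ℝ) ≤ s / t := by positivity
  have hb : (0:ℝ) ≤ 1 - s / t := by
    have : s / t ≤ 1 := by rw [div_le_one ht]; exact hst
    linarith
  have hab : s / t + (1 - s / t) = 1 := by ring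
  have key := hf.2 (Set.mem_univ (t • x)) (Set.mem_univ (0 : EuclideanSpace ℝ (Fin d)))
    ha hb hab
  have hx : (s / t) • (t • x) + (1 - s / t) • (0 : EuclideanSpace ℝ (Fin d)) = s • x := by
    rw [smul_zero, add_zero, smul_smul, div_mul_cancel₀]
    exact ht.ne'
  rw [hx] at key
  simp only [smul_eq_mul] at key
  rw [div_le_div_iff₀ ht hs]
  have h := mul_le_mul_of_nonneg_right key ht.le
  have e1 : s / t * f (t • x) * t = s * f (t • x) := by field_simp
  have e2 : (1 - s / t) * f 0 * t = (t - s) * f 0 := by field_simp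
  rw [add_mul, e1, e2] at h
  nlinarith [h]

/-- The reverse direction: a concave function that decomposes is globally Lipschitz. -/
lemma aux_reverse {d : ℕ} (f : EuclideanSpace ℝ (Fin d) → ℝ)
    (hf : ConcaveOn ℝ Set.univ f) {A B : ℝ} (hA : 0 ≤ A) (hB : 0 ≤ B)
    (hlb : ∀ x, -(A + B * ‖x‖) ≤ f x) :
    GloballyLipschitz d f := by
  refine ⟨B, hB, fun x y => ?_⟩
  -- It suffices to prove the one-sided bound for all pairs.
  have main : ∀ x y : EuclideanSpace ℝ (Fin d), f x - f y ≤ B * ‖x - y‖ := by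
    intro x y
    rcases eq_or_ne x y with rfl | hxy
    · simp
    have hr : 0 < ‖x - y‖ := by
      rw [norm_pos_iff, sub_ne_zero]; exact hxy
    set r := ‖x - y‖ with hrdef
    -- for every t > 0 the three-point concavity inequality
    have step : ∀ t : ℝ, 0 < t →
        f x - f y ≤ (r / t) * (f y + A + B * ‖y‖) + r * B := by
      intro t ht
      set z : EuclideanSpace ℝ (Fin d) := y + (t / r) • (y - x) with hz
      have hcomb : (t / (t + r)) • x + (r / (t + r)) • z = y := by
        rw [hz]
        have htr : t + r ≠ 0 := by positivity
        have hr' : r ≠ 0 := hr.ne'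
        match_scalars <;> field_simp <;> ring
      have ha : (0:ℝ) ≤ t / (t + r) := by positivity
      have hb : (0:ℝ) ≤ r / (t + r) := by positivity
      have hab : t / (t + r) + r / (t + r) = 1 := by
        field_simp
      have key := hf.2 (Set.mem_univ x) (Set.mem_univ z) ha hb hab
      rw [hcomb] at key
      simp only [smul_eq_mul] at key
      have hznorm : ‖z‖ ≤ ‖y‖ + t := by
        calc ‖z‖ ≤ ‖y‖ + ‖(t / r) • (y - x)‖ := norm_add_le _ _
        _ = ‖y‖ + (t / r) * r := by
            rw [norm_smul, Real.norm_eq_abs, abs_of_pos (by positivity)]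
            rw [norm_sub_rev]
        _ = ‖y‖ + t := by rw [div_mul_cancel₀ _ hr.ne']
      have hzlb : -(A + B * (‖y‖ + t)) ≤ f z := by
        have := hlb z
        nlinarith [this, hznorm]
      -- key : t/(t+r) * f x + r/(t+r) * f z ≤ f y
      have htr : 0 < t + r := by positivity
      have key2 : t * f x + r * f z ≤ (t + r) * f y := by
        have h := mul_le_mul_of_nonneg_right key htr.le
        have e1 : t / (t + r) * f x * (t + r) = t * f x := by field_simp
        have e2 : r / (t + r) * f z * (t + r) = r * f z := by field_simp
        rw [add_mul, e1, e2] at h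
        linarith [h]
      have key3 : t * (f x - f y) ≤ r * (f y + A + B * ‖y‖) + r * B * t := by
        nlinarith [key2, mul_le_mul_of_nonneg_left hzlb hr.le]
      have hdiv : f x - f y ≤ (r * (f y + A + B * ‖y‖) + r * B * t) / t := by
        rw [le_div_iff₀ ht]; nlinarith [key3]
      have heq : (r * (f y + A + B * ‖y‖) + r * B * t) / t
          = r / t * (f y + A + B * ‖y‖) + r * B := by
        field_simp
      linarith [hdiv, heq.le, heq.ge]
    -- take t → ∞
    have : f x - f y ≤ r * B := by
      by_contra hcon
      push_neg at hcon
      set K := f y + A + B * ‖y‖ with hK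
      set ε := (f x - f y - r * B) / 2 with hε
      have hεpos : 0 < ε := by rw [hε]; linarith
      set t := max 1 (r * K / ε) with htdef
      have ht : 0 < t := lt_of_lt_of_le one_pos (le_max_left _ _)
      have hstep := step t ht
      have hfrac : (r / t) * K ≤ ε := by
        rcases le_or_gt K 0 with hK0 | hK0
        · have : (r / t) * K ≤ 0 := mul_nonpos_of_nonneg_of_nonpos (by positivity) hK0
          linarith
        · have h1 : r * K / ε ≤ t := le_max_right _ _
          rw [div_le_iff₀ hεpos] at h1
          rw [div_mul_eq_mul_div, div_le_iff₀ ht]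
          nlinarith
      have : f x - f y ≤ ε + r * B := by
        calc f x - f y ≤ (r / t) * K + r * B := hstep
        _ ≤ ε + r * B := by linarith
      rw [hε] at this
      linarith
    linarith [this, mul_comm r B]
  rw [abs_sub_le_iff]
  constructor
  · exact main x y
  · rw [norm_sub_rev]; exact main y x


set_option maxHeartbeats 1000000 in
/-- The forward direction: a concave globally Lipschitz function decomposes. -/
lemma aux_forward {d : ℕ} (f : EuclideanSpace ℝ (Fin d) → ℝ)
    (hf : ConcaveOn ℝ Set.univ f) {C : ℝ} (hC : 0 ≤ C)
    (hL : ∀ x y, |f x - f y| ≤ C * ‖x - y‖) :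
    ∃ f₀ Ψ : EuclideanSpace ℝ (Fin d) → ℝ,
      Continuous f₀ ∧ Sublinear d f₀ ∧ Continuous Ψ ∧ Conical d Ψ ∧
        ∀ x, f x = f₀ x + Ψ x := by
  classical
  -- the slope function and the recession function Ψ
  set e : EuclideanSpace ℝ (Fin d) → ℝ → ℝ := fun x t => (f (t • x) - f 0) / t with he
  set S : EuclideanSpace ℝ (Fin d) → Set ℝ := fun x => e x '' Set.Ioi (0:ℝ) with hS
  set Ψ : EuclideanSpace ℝ (Fin d) → ℝ := fun x => sInf (S x) with hΨ
  -- basic bound on slopes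
  have helem : ∀ (x : EuclideanSpace ℝ (Fin d)) (t : ℝ), 0 < t → |e x t| ≤ C * ‖x‖ := by
    intro x t ht
    have h1 : |f (t • x) - f 0| ≤ C * (t * ‖x‖) := by
      have := hL (t • x) 0
      rwa [sub_zero, norm_smul, Real.norm_eq_abs, abs_of_pos ht] at this
    rw [he, abs_div, abs_of_pos ht, div_le_iff₀ ht]
    calc |f (t • x) - f 0| ≤ C * (t * ‖x‖) := h1
    _ = C * ‖x‖ * t := by ring
  have hlbmem : ∀ (x : EuclideanSpace ℝ (Fin d)), ∀ a ∈ S x, -(C * ‖x‖) ≤ a := by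
    rintro x a ⟨t, ht, rfl⟩
    have := helem x t ht
    have := abs_le.mp this
    linarith [this.1]
  have hbdd : ∀ x : EuclideanSpace ℝ (Fin d), BddBelow (S x) := fun x => ⟨-(C * ‖x‖), hlbmem x⟩
  have hne : ∀ x : EuclideanSpace ℝ (Fin d), (S x).Nonempty := fun x => ⟨e x 1, ⟨1, by norm_num, rfl⟩⟩
  have hPsi_le : ∀ (x : EuclideanSpace ℝ (Fin d)) (t : ℝ), 0 < t → Ψ x ≤ e x t := by
    intro x t ht
    exact csInf_le (hbdd x) ⟨t, ht, rfl⟩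
  have hPsi_lb : ∀ x : EuclideanSpace ℝ (Fin d), -(C * ‖x‖) ≤ Ψ x := fun x => le_csInf (hne x) (hlbmem x)
  -- slopes are antitone in t
  have hanti : ∀ (x : EuclideanSpace ℝ (Fin d)) {s t : ℝ}, 0 < s → s ≤ t → e x t ≤ e x s := by
    intro x s t hs hst
    exact aux_slope_anti f hf x hs hst
  -- Lipschitz bound on slopes in x
  have helip : ∀ (x y : EuclideanSpace ℝ (Fin d)) (t : ℝ), 0 < t → e x t ≤ e y t + C * ‖x - y‖ := by
    intro x y t ht
    have h1 : |f (t • x) - f (t • y)| ≤ C * (t * ‖x - y‖) := by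
      have := hL (t • x) (t • y)
      rwa [← smul_sub, norm_smul, Real.norm_eq_abs, abs_of_pos ht] at this
    have h2 := (abs_le.mp h1).2
    rw [he]
    rw [div_add' _ _ _ ht.ne', div_le_div_iff₀ ht ht]
    nlinarith [h2, ht]
  -- Ψ is Lipschitz
  have hPsiLip1 : ∀ x y : EuclideanSpace ℝ (Fin d), Ψ x ≤ Ψ y + C * ‖x - y‖ := by
    intro x y
    have : Ψ x - C * ‖x - y‖ ≤ Ψ y := by
      apply le_csInf (hne y)
      rintro a ⟨t, ht, rfl⟩
      have h1 : Ψ x ≤ e x t := hPsi_le x t ht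
      have h2 : e x t ≤ e y t + C * ‖x - y‖ := helip x y t ht
      linarith
    linarith
  have hPsiLip : ∀ x y : EuclideanSpace ℝ (Fin d), |Ψ x - Ψ y| ≤ C * ‖x - y‖ := by
    intro x y
    rw [abs_sub_le_iff]
    refine ⟨by linarith [hPsiLip1 x y], ?_⟩
    have := hPsiLip1 y x
    rw [norm_sub_rev] at this
    linarith
  -- Ψ is conical
  have hPsi0 : Ψ 0 = 0 := by
    have hS0 : S (0:EuclideanSpace ℝ (Fin d)) = {0} := by
      apply Set.eq_singleton_iff_unique_mem.mpr
      constructor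
      · exact ⟨1, by norm_num, by simp [he]⟩
      · rintro a ⟨t, ht, rfl⟩
        simp [he]
    show sInf (S 0) = 0
    rw [hS0]; exact csInf_singleton 0
  have hConical : Conical d Ψ := by
    intro c hc x
    rcases eq_or_lt_of_le hc with hc0 | hc0
    · rw [← hc0, zero_smul, zero_mul, hPsi0]
    · have himg : S (c • x) = c • (S x) := by
        ext a
        constructor
        · rintro ⟨t, ht, rfl⟩
          have ht' : t ≠ 0 := (ne_of_gt (Set.mem_Ioi.mp ht))
          have hval : e (c • x) t = c • (e x (t * c)) := by
            simp only [he, smul_eq_mul, smul_smul]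
            rw [mul_comm t c]
            field_simp
          rw [hval]
          exact smul_mem_smul_set ⟨t * c, mul_pos ht hc0, rfl⟩
        · rintro ⟨a', ⟨t, ht, rfl⟩, rfl⟩
          have ht' : t ≠ 0 := (ne_of_gt (Set.mem_Ioi.mp ht))
          refine ⟨t / c, div_pos ht hc0, ?_⟩
          simp only [he, smul_eq_mul, smul_smul]
          rw [div_mul_cancel₀ _ hc0.ne']
          field_simp
      show sInf (S (c • x)) = c * sInf (S x)
      rw [himg, Real.sInf_smul_of_nonneg hc (S x), smul_eq_mul]
  -- Ψ and f are continuous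
  have hPsiCont : Continuous Ψ := by
    apply (LipschitzWith.of_dist_le_mul (K := C.toNNReal) ?_).continuous
    intro x y
    rw [Real.dist_eq, dist_eq_norm, Real.coe_toNNReal _ hC]
    exact hPsiLip x y
  have hfCont : Continuous f := by
    apply (LipschitzWith.of_dist_le_mul (K := C.toNNReal) ?_).continuous
    intro x y
    rw [Real.dist_eq, dist_eq_norm, Real.coe_toNNReal _ hC]
    exact hL x y
  -- uniform convergence of slopes to Ψ on the unit sphere
  have hg_nonneg : ∀ (x : EuclideanSpace ℝ (Fin d)) (t : ℝ), 0 < t → 0 ≤ e x t - Ψ x := by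
    intro x t ht; linarith [hPsi_le x t ht]
  have key : ∀ ε : ℝ, 0 < ε → ∃ T : ℝ, 1 ≤ T ∧
      ∀ u : EuclideanSpace ℝ (Fin d), ‖u‖ = 1 → e u T - Ψ u ≤ ε := by
    intro ε hε
    -- pointwise: choose a good time for each point
    have hpt : ∀ u : EuclideanSpace ℝ (Fin d), ∃ t : ℝ, 1 ≤ t ∧ e u t - Ψ u < ε / 2 := by
      intro u
      obtain ⟨a, ⟨t, ht, rfl⟩, hlt⟩ := exists_lt_of_csInf_lt (hne u)
        (show sInf (S u) < Ψ u + ε / 2 from lt_add_of_pos_right _ (by linarith))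
      refine ⟨max t 1, le_max_right _ _, ?_⟩
      have h1 : e u (max t 1) ≤ e u t := hanti u ht (le_max_left _ _)
      linarith
    choose tfun htfun1 htfun2 using hpt
    set δ : ℝ := ε / (2 * (2 * C + 1)) with hδ
    have hδpos : 0 < δ := by positivity
    -- compactness of the sphere
    have hcomp : IsCompact (Metric.sphere (0:EuclideanSpace ℝ (Fin d)) 1) := isCompact_sphere 0 1
    have hcover : Metric.sphere (0:EuclideanSpace ℝ (Fin d)) 1 ⊆ ⋃ u : EuclideanSpace ℝ (Fin d), ⋃ (_ : u ∈ Metric.sphere (0:EuclideanSpace ℝ (Fin d)) 1),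
        Metric.ball u δ := by
      intro u hu
      exact Set.mem_biUnion hu (Metric.mem_ball_self hδpos)
    obtain ⟨s, hs⟩ := hcomp.elim_finite_subcover_image
      (fun u _ => Metric.isOpen_ball) hcover
    obtain ⟨hs_sub, hs_fin, hs_cov⟩ := hs
    -- a common time bound
    have : ∃ T : ℝ, 1 ≤ T ∧ ∀ u ∈ s, tfun u ≤ T := by
      obtain ⟨M, hM⟩ := (hs_fin.toFinset.image tfun).exists_le
      refine ⟨max M 1, le_max_right _ _, fun u hu => ?_⟩
      have : tfun u ≤ M := hM _ (Finset.mem_image_of_mem tfun (hs_fin.mem_toFinset.mpr hu))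
      exact this.trans (le_max_left _ _)
    obtain ⟨T, hT1, hTle⟩ := this
    refine ⟨T, hT1, fun u hu => ?_⟩
    have hu' : u ∈ Metric.sphere (0:EuclideanSpace ℝ (Fin d)) 1 := by
      rw [mem_sphere_zero_iff_norm]; exact hu
    obtain ⟨i, hiU⟩ := Set.mem_iUnion.mp (hs_cov hu')
    obtain ⟨his, hiball⟩ := Set.mem_iUnion.mp hiU
    have hdist : ‖u - i‖ < δ := by
      rw [← dist_eq_norm]; exact hiball
    have hti : 1 ≤ tfun i := htfun1 i
    have h1 : e u T ≤ e u (tfun i) := hanti u (by linarith : (0:ℝ) < tfun i) (hTle i his)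
    have h2 : e u (tfun i) ≤ e i (tfun i) + C * ‖u - i‖ :=
      helip u i (tfun i) (by linarith)
    have h3 : e i (tfun i) - Ψ i < ε / 2 := htfun2 i
    have h4 : Ψ i ≤ Ψ u + C * ‖i - u‖ := hPsiLip1 i u
    have h5 : ‖i - u‖ = ‖u - i‖ := norm_sub_rev i u
    have hCd : C * ‖u - i‖ ≤ C * δ := mul_le_mul_of_nonneg_left hdist.le hC
    have hCδ : 2 * (C * δ) ≤ ε / 2 := by
      have hpos : 0 < ε / (2 * (2 * C + 1)) := by positivity
      have heq2 : (2 * C + 1) * (ε / (2 * (2 * C + 1))) = ε / 2 := by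
        have h21 : (2 * C + 1) ≠ 0 := by positivity
        field_simp
      have hle : (2 * C) * (ε / (2 * (2 * C + 1))) ≤ (2 * C + 1) * (ε / (2 * (2 * C + 1))) :=
        mul_le_mul_of_nonneg_right (by linarith) hpos.le
      rw [hδ]; linarith
    have A1 : e u T ≤ e i (tfun i) + C * ‖u - i‖ := le_trans h1 h2
    have A2 : e u T - Ψ u ≤ ε / 2 + C * ‖u - i‖ + C * ‖i - u‖ := by linarith
    rw [h5] at A2
    linarith
  -- construct f₀ and conclude
  refine ⟨fun x => f x - Ψ x, Ψ, hfCont.sub hPsiCont, ?_, hPsiCont, hConical, fun x => by ring⟩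
  intro ε hε
  obtain ⟨T, hT1, hT⟩ := key (ε / 2) (by linarith)
  refine ⟨max T (2 * |f 0| / ε + 1), lt_of_lt_of_le (by positivity) (le_max_right _ _),
    fun x hx => ?_⟩
  have hxT : T ≤ ‖x‖ := le_trans (le_max_left _ _) hx
  have hxf0 : 2 * |f 0| / ε + 1 ≤ ‖x‖ := le_trans (le_max_right _ _) hx
  have hxpos : 0 < ‖x‖ := lt_of_lt_of_le (by linarith : (0:ℝ) < 1) (by linarith)
  have hxne : x ≠ 0 := by
    intro h; rw [h, norm_zero] at hxpos; exact lt_irrefl 0 hxpos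
  set u : EuclideanSpace ℝ (Fin d) := ‖x‖⁻¹ • x with hu
  have hunorm : ‖u‖ = 1 := by
    rw [hu, norm_smul, Real.norm_eq_abs, abs_of_pos (by positivity), inv_mul_cancel₀ hxpos.ne']
  have hxu : ‖x‖ • u = x := by
    rw [hu, smul_smul, mul_inv_cancel₀ hxpos.ne', one_smul]
  have hPsixu : Ψ x = ‖x‖ * Ψ u := by
    conv_lhs => rw [← hxu]
    exact hConical ‖x‖ (norm_nonneg x) u
  have heux : e u ‖x‖ = (f x - f 0) / ‖x‖ := by
    simp only [he]
    rw [hxu]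
  have h1 : e u ‖x‖ - Ψ u ≤ e u T - Ψ u := by
    have := hanti u (by linarith : (0:ℝ) < T) hxT
    linarith
  have h2 : e u ‖x‖ - Ψ u ≤ ε / 2 := le_trans h1 (hT u hunorm)
  have h3 : 0 ≤ e u ‖x‖ - Ψ u := hg_nonneg u ‖x‖ hxpos
  rw [heux] at h2 h3
  -- turn the slope bounds into bounds on f x - Ψ x
  have h4 : f x - f 0 - Ψ x ≤ (ε / 2) * ‖x‖ := by
    rw [hPsixu]
    have := mul_le_mul_of_nonneg_right h2 hxpos.le
    rw [sub_mul, div_mul_cancel₀ _ hxpos.ne'] at this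
    linarith
  have h5 : 0 ≤ f x - f 0 - Ψ x := by
    rw [hPsixu]
    have := mul_le_mul_of_nonneg_right h3 hxpos.le
    rw [zero_mul, sub_mul, div_mul_cancel₀ _ hxpos.ne'] at this
    linarith
  have habs : |f x - Ψ x| ≤ |f 0| + (ε / 2) * ‖x‖ := by
    rw [abs_le]
    constructor
    · have := abs_le.mp (le_refl |f 0|)
      nlinarith [abs_nonneg (f 0), neg_abs_le (f 0), h5, hε, hxpos]
    · nlinarith [le_abs_self (f 0), h4]
  have hfinal : |f 0| + (ε / 2) * ‖x‖ ≤ ε * (1 + ‖x‖) := by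
    have : 2 * |f 0| / ε ≤ ‖x‖ - 1 := by linarith
    rw [div_le_iff₀ hε] at this
    nlinarith [hxpos, hε]
  exact le_trans habs hfinal

/-- A concave function `f : E → ℝ` is globally Lipschitz iff it decomposes as a sum of a
continuous sublinear function and a continuous conical function. -/
theorem stmt_9 (d : ℕ) (hd : 1 ≤ d) (f : EuclideanSpace ℝ (Fin d) → ℝ)
    (hf : ConcaveOn ℝ Set.univ f) :
    GloballyLipschitz d f ↔
      ∃ f₀ Ψ : EuclideanSpace ℝ (Fin d) → ℝ,
        Continuous f₀ ∧ Sublinear d f₀ ∧ Continuous Ψ ∧ Conical d Ψ ∧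
          ∀ x, f x = f₀ x + Ψ x := by
  constructor
  · rintro ⟨C, hC, hL⟩
    exact aux_forward f hf hC hL
  · rintro ⟨f₀, Ψ, hf₀cont, hf₀sub, hΨcont, hΨcon, hsum⟩
    -- bound Ψ linearly using continuity at 0 and conicality
    have hΨ0 : Ψ 0 = 0 := by
      have := hΨcon 0 le_rfl 0
      simpa using this
    obtain ⟨δ, hδpos, hδ⟩ := Metric.continuous_iff.mp hΨcont 0 1 one_pos
    have hΨbound : ∀ x, |Ψ x| ≤ (2 / δ) * ‖x‖ := by
      intro x
      rcases eq_or_ne x 0 with rfl | hx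
      · simp [hΨ0]
      · have hxpos : 0 < ‖x‖ := norm_pos_iff.mpr hx
        set c : ℝ := 2 * ‖x‖ / δ with hc
        have hcpos : 0 < c := by positivity
        set u : EuclideanSpace ℝ (Fin d) := c⁻¹ • x with hu
        have hunorm : ‖u‖ = δ / 2 := by
          rw [hu, norm_smul, Real.norm_eq_abs, abs_of_pos (by positivity), hc]
          field_simp
        have husmall : dist u 0 < δ := by
          rw [dist_zero_right, hunorm]
          linarith
        have hΨu : |Ψ u| < 1 := by
          have := hδ u husmall
          rwa [Real.dist_eq, hΨ0, sub_zero] at this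
        have hx_eq : x = c • u := by
          rw [hu, smul_smul, mul_inv_cancel₀ hcpos.ne', one_smul]
        have : Ψ x = c * Ψ u := by rw [hx_eq]; exact hΨcon c hcpos.le u
        rw [this, abs_mul, abs_of_pos hcpos]
        calc c * |Ψ u| ≤ c * 1 := mul_le_mul_of_nonneg_left hΨu.le hcpos.le
        _ = 2 * ‖x‖ / δ := by rw [hc]; ring
        _ = (2 / δ) * ‖x‖ := by ring
    -- bound f₀ affinely: sublinear at infinity, bounded on a compact ball
    obtain ⟨R, hRpos, hR⟩ := hf₀sub 1 one_pos
    obtain ⟨M, hM⟩ := (isCompact_closedBall (0 : EuclideanSpace ℝ (Fin d)) R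
      ).exists_bound_of_continuousOn hf₀cont.continuousOn
    have hf₀bound : ∀ x, |f₀ x| ≤ (max M 1 + 1) + ‖x‖ := by
      intro x
      rcases le_or_gt R ‖x‖ with h | h
      · have := hR x h
        have h1 : (1:ℝ) ≤ max M 1 + 1 := by
          have := le_max_right M 1; linarith
        nlinarith [this]
      · have hx : x ∈ Metric.closedBall (0 : EuclideanSpace ℝ (Fin d)) R := by
          rw [Metric.mem_closedBall, dist_zero_right]; exact h.le
        have := hM x hx
        rw [Real.norm_eq_abs] at this
        have h1 : M ≤ max M 1 := le_max_left M 1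
        have h2 : (0:ℝ) ≤ ‖x‖ := norm_nonneg x
        linarith
    -- total lower bound and apply aux_reverse
    set A : ℝ := max M 1 + 1 with hA
    set B : ℝ := 1 + 2 / δ with hB
    have hApos : 0 ≤ A := by
      have := le_max_right M 1
      rw [hA]; linarith
    have hBpos : 0 ≤ B := by rw [hB]; positivity
    apply aux_reverse f hf hApos hBpos
    intro x
    rw [hsum x]
    have h1 := hf₀bound x
    have h2 := hΨbound x
    have h3 := abs_le.mp h1
    have h4 := abs_le.mp h2
    rw [hA, hB]
    have : (1 + 2 / δ) * ‖x‖ = ‖x‖ + (2/δ) * ‖x‖ := by ring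
    rw [this]
    linarith [h3.1, h4.1]
end
end

section
/- Let f and f_n (n ∈ ℕ) be globally Lipschitz concave functions E → ℝ with f_n(x) ≤ f_{n+1}(x) for all n and x. Then f_n → f in the G-norm if and only if both (a) f_n → f pointwise on E, and (b) rec(f_n) → rec(f) in the C-norm. -/
open Set

noncomputable section

/-- `r` is the recession function of `f`: `r(x) = lim_{λ→∞} f(λx)/λ`. -/
def IsRecessionFn (d : ℕ) (f r : EuclideanSpace ℝ (Fin d) → ℝ) : Prop :=
  ∀ x, Filter.Tendsto (fun t : ℝ => f (t • x) / t) Filter.atTop (nhds (r x))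

/-! Dividing the G-norm bound at `t • x` by `t` and letting `t → ∞` gives the forward direction.
Conversely, `f - fₙ ≥ 0` decreases to `0`, so by Dini it is uniformly small on every ball.
Away from a ball of radius `M`, concavity makes the slope `(f (t • u) - f 0) / t` decrease in `t`
towards `rec f u`, and keeps it above `rec fₙ u`. Hence
`f (t • u) - fₙ (t • u) ≤ f 0 - fₙ 0 + t * ((f (M • u) - f 0) / M - rec fₙ u)` for `t ≥ M`.
Dini applied to these slopes on the unit sphere gives an `M` for which they are uniformly close
to `rec f`, and C-norm convergence makes `rec f - rec fₙ` small. -/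

section ConcaveRecession

open Filter Topology Metric

variable {E : Type*} [NormedAddCommGroup E]

def TendstoInGNorm (F : ℕ → E → ℝ) (f : E → ℝ) : Prop :=
  ∀ ε : ℝ, 0 < ε → ∃ N : ℕ, ∀ n ≥ N, ∀ x, |F n x - f x| ≤ ε * (1 + ‖x‖)

def TendstoInCNorm (F : ℕ → E → ℝ) (f : E → ℝ) : Prop :=
  ∀ ε : ℝ, 0 < ε → ∃ N : ℕ, ∀ n ≥ N, ∀ x, |F n x - f x| ≤ ε * ‖x‖

namespace TendstoInGNorm

variable {F : ℕ → E → ℝ} {f : E → ℝ}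

lemma tendsto_apply (h : TendstoInGNorm F f) (x : E) : Tendsto (F · x) atTop (𝓝 (f x)) := by
  refine Metric.tendsto_atTop.2 fun ε hε => ?_
  obtain ⟨N, hN⟩ := h (ε / (2 * (1 + ‖x‖))) (by positivity)
  refine ⟨N, fun n hn => ?_⟩
  calc dist (F n x) (f x) ≤ ε / (2 * (1 + ‖x‖)) * (1 + ‖x‖) := hN n hn x
    _ = ε / 2 := by field_simp
    _ < ε := half_lt_self hε

end TendstoInGNorm

variable [NormedSpace ℝ E]

lemma ConcaveOn.slope_smul_antitoneOn {g : E → ℝ} (hg : ConcaveOn ℝ univ g) (u : E) :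
    AntitoneOn (fun t => (g (t • u) - g 0) / t) (Ioi 0) := by
  have hline : ConvexOn ℝ univ (fun t : ℝ => -g (t • u)) :=
    (hg.comp_linearMap (LinearMap.toSpanSingleton ℝ E u)).neg
  intro s hs t ht hst
  have := hline.secant_mono (mem_univ 0) (mem_univ s) (mem_univ t) (ne_of_gt hs) (ne_of_gt ht) hst
  simp only [zero_smul, sub_zero] at this
  rwa [neg_sub_neg, neg_sub_neg, ← neg_sub (g (s • u)), ← neg_sub (g (t • u)), neg_div,
    neg_div, neg_le_neg_iff] at this

lemma tendsto_slope_smul {g : E → ℝ} {u : E} {ρ : ℝ}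
    (hρ : Tendsto (fun t : ℝ => g (t • u) / t) atTop (𝓝 ρ)) :
    Tendsto (fun t : ℝ => (g (t • u) - g 0) / t) atTop (𝓝 ρ) := by
  simpa only [sub_div, id, sub_zero] using
    hρ.sub ((tendsto_const_nhds (x := g 0)).div_atTop tendsto_id)

lemma ConcaveOn.le_slope_smul {g : E → ℝ} (hg : ConcaveOn ℝ univ g) {u : E} {ρ : ℝ}
    (hρ : Tendsto (fun t : ℝ => g (t • u) / t) atTop (𝓝 ρ)) {t : ℝ} (ht : 0 < t) :
    ρ ≤ (g (t • u) - g 0) / t := by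
  refine le_of_tendsto (tendsto_slope_smul hρ) ?_
  filter_upwards [eventually_ge_atTop t] with s hts
  exact hg.slope_smul_antitoneOn u ht (ht.trans_le hts) hts

lemma LipschitzWith.of_tendsto_smul_div {g ρ : E → ℝ} {K : NNReal} (hg : LipschitzWith K g)
    (hρ : ∀ x, Tendsto (fun t : ℝ => g (t • x) / t) atTop (𝓝 (ρ x))) : LipschitzWith K ρ := by
  refine LipschitzWith.of_dist_le_mul fun x y => le_of_tendsto ((hρ x).dist (hρ y)) ?_
  filter_upwards [eventually_gt_atTop 0] with t ht
  rw [Real.dist_eq, ← sub_div, abs_div, abs_of_pos ht, div_le_iff₀ ht]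
  calc |g (t • x) - g (t • y)| ≤ K * dist (t • x) (t • y) := by
        rw [← Real.dist_eq]; exact hg.dist_le_mul _ _
    _ = K * dist x y * t := by rw [dist_smul₀, Real.norm_of_nonneg ht.le]; ring

lemma TendstoInGNorm.tendstoInCNorm {F ρF : ℕ → E → ℝ} {f ρ : E → ℝ} (h : TendstoInGNorm F f)
    (hρF : ∀ n x, Tendsto (fun t : ℝ => F n (t • x) / t) atTop (𝓝 (ρF n x)))
    (hρ : ∀ x, Tendsto (fun t : ℝ => f (t • x) / t) atTop (𝓝 (ρ x))) :
    TendstoInCNorm ρF ρ := by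
  intro ε hε
  obtain ⟨N, hN⟩ := h ε hε
  refine ⟨N, fun n hn x => ?_⟩
  have hbound : Tendsto (fun t : ℝ => ε / t + ε * ‖x‖) atTop (𝓝 (ε * ‖x‖)) := by
    simpa using ((tendsto_const_nhds (x := ε)).div_atTop tendsto_id).add_const (ε * ‖x‖)
  refine le_of_tendsto_of_tendsto ((hρF n x).sub (hρ x)).abs hbound ?_
  filter_upwards [eventually_gt_atTop 0] with t ht
  rw [← sub_div, abs_div, abs_of_pos ht, div_add' _ _ _ ht.ne', div_le_div_iff_of_pos_right ht]
  calc |F n (t • x) - f (t • x)| ≤ ε * (1 + ‖t • x‖) := hN n hn (t • x)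
    _ = ε + ε * ‖x‖ * t := by rw [norm_smul, Real.norm_of_nonneg ht.le]; ring

lemma ConcaveOn.exists_slope_smul_lt {f ρ : E → ℝ} {K : Set E} (hK : IsCompact K)
    (hf : ConcaveOn ℝ univ f) (hfc : Continuous f) (hρc : Continuous ρ)
    (hρ : ∀ x, Tendsto (fun t : ℝ => f (t • x) / t) atTop (𝓝 (ρ x))) {ε : ℝ} (hε : 0 < ε) :
    ∃ M > 0, ∀ u ∈ K, (f (M • u) - f 0) / M < ρ u + ε := by
  have hS : TendstoUniformlyOn (fun (m : ℕ) u => (f (((m : ℝ) + 1) • u) - f 0) / ((m : ℝ) + 1))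
      ρ atTop K := by
    refine Antitone.tendstoUniformlyOn_of_forall_tendsto hK (fun m => by fun_prop)
      (fun u _ => antitone_nat_of_succ_le fun m => ?_) hρc.continuousOn
      (fun u _ => (tendsto_slope_smul (hρ u)).comp
        (tendsto_atTop_add_const_right _ 1 tendsto_natCast_atTop_atTop))
    refine hf.slope_smul_antitoneOn u (mem_Ioi.2 (by positivity)) (mem_Ioi.2 (by positivity)) ?_
    push_cast
    linarith
  obtain ⟨m, hm⟩ := (Metric.tendstoUniformlyOn_iff.1 hS ε hε).exists
  refine ⟨m + 1, by positivity, fun u hu => ?_⟩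
  have := hm u hu
  rw [Real.dist_eq, abs_sub_lt_iff] at this
  linarith [this.2]

lemma ConcaveOn.sub_apply_smul_le {f g : E → ℝ} (hf : ConcaveOn ℝ univ f)
    (hg : ConcaveOn ℝ univ g) {u : E} {ρ : ℝ}
    (hρ : Tendsto (fun t : ℝ => g (t • u) / t) atTop (𝓝 ρ)) {M t : ℝ} (hM : 0 < M)
    (hMt : M ≤ t) :
    f (t • u) - g (t • u) ≤ f 0 - g 0 + t * ((f (M • u) - f 0) / M - ρ) := by
  have ht : 0 < t := hM.trans_le hMt
  have hf_le : f (t • u) - f 0 ≤ t * ((f (M • u) - f 0) / M) :=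
    (div_le_iff₀' ht).1 (hf.slope_smul_antitoneOn u hM ht hMt)
  have hg_ge : t * ρ ≤ g (t • u) - g 0 := (le_div_iff₀' ht).1 (hg.le_slope_smul hρ ht)
  linarith [mul_sub t ((f (M • u) - f 0) / M) ρ]

theorem tendstoInGNorm_of_monotone [ProperSpace E] {F : ℕ → E → ℝ} {f : E → ℝ}
    {ρF : ℕ → E → ℝ} {ρ : E → ℝ} (hF : ∀ n, ConcaveOn ℝ univ (F n))
    (hFc : ∀ n, Continuous (F n)) (hf : ConcaveOn ℝ univ f) (hfc : Continuous f)
    (hρc : Continuous ρ) (hρF : ∀ n x, Tendsto (fun t : ℝ => F n (t • x) / t) atTop (𝓝 (ρF n x)))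
    (hρ : ∀ x, Tendsto (fun t : ℝ => f (t • x) / t) atTop (𝓝 (ρ x)))
    (hmono : ∀ x, Monotone (F · x)) (hpt : ∀ x, Tendsto (F · x) atTop (𝓝 (f x)))
    (hC : TendstoInCNorm ρF ρ) : TendstoInGNorm F f := by
  intro ε hε
  have hε3 : 0 < ε / 3 := by positivity
  obtain ⟨M, hM, hslope⟩ := hf.exists_slope_smul_lt (isCompact_sphere 0 1) hfc hρc hρ hε3
  have hball := Monotone.tendstoUniformlyOn_of_forall_tendsto (isCompact_closedBall (0 : E) M)
    (fun n => (hFc n).continuousOn) (fun x _ => hmono x) hfc.continuousOn (fun x _ => hpt x)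
  obtain ⟨N₁, hN₁⟩ := (Metric.tendstoUniformlyOn_iff.1 hball (ε / 3) hε3).exists_forall_of_atTop
  obtain ⟨N₂, hN₂⟩ := hC (ε / 3) hε3
  refine ⟨max N₁ N₂, fun n hn x => ?_⟩
  have hnear : ∀ y ∈ closedBall 0 M, f y - F n y < ε / 3 := fun y hy =>
    (abs_lt.1 (Real.dist_eq _ _ ▸ hN₁ n (le_of_max_le_left hn) y hy)).2
  rw [abs_sub_comm, abs_of_nonneg (sub_nonneg.2 ((hmono x).ge_of_tendsto (hpt x) n))]
  rcases le_or_gt ‖x‖ M with hxM | hxM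
  · nlinarith [hnear x (mem_closedBall_zero_iff.2 hxM), norm_nonneg x]
  set u := ‖x‖⁻¹ • x
  have hx0 : ‖x‖ ≠ 0 := (hM.trans hxM).ne'
  have hu : ‖u‖ = 1 := by rw [norm_smul, norm_inv, norm_norm, inv_mul_cancel₀ hx0]
  have key := hf.sub_apply_smul_le (hF n) (hρF n u) hM hxM.le
  rw [smul_inv_smul₀ hx0] at key
  have hrec : ρ u - ρF n u ≤ ε / 3 := by
    have := hN₂ n (le_of_max_le_right hn) u
    rw [hu, mul_one, abs_le] at this
    linarith
  have hgap : ‖x‖ * ((f (M • u) - f 0) / M - ρF n u) ≤ ‖x‖ * (2 * (ε / 3)) :=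
    mul_le_mul_of_nonneg_left (by linarith [hslope u (mem_sphere_zero_iff_norm.2 hu)])
      (norm_nonneg x)
  linarith [hnear 0 (mem_closedBall_self hM.le), mul_nonneg hε.le (norm_nonneg x)]

end ConcaveRecession

lemma GloballyLipschitz.exists_lipschitzWith {d : ℕ} {f : EuclideanSpace ℝ (Fin d) → ℝ}
    (h : GloballyLipschitz d f) : ∃ K, LipschitzWith K f := by
  obtain ⟨C, hC, hCf⟩ := h
  refine ⟨C.toNNReal, LipschitzWith.of_dist_le_mul fun x y => ?_⟩
  rw [Real.dist_eq, dist_eq_norm, Real.coe_toNNReal C hC]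
  exact hCf x y

lemma GloballyLipschitz.continuous {d : ℕ} {f : EuclideanSpace ℝ (Fin d) → ℝ}
    (h : GloballyLipschitz d f) : Continuous f :=
  let ⟨_, hK⟩ := h.exists_lipschitzWith
  hK.continuous

theorem stmt_10_general (d : ℕ)
    (f : EuclideanSpace ℝ (Fin d) → ℝ) (fn : ℕ → EuclideanSpace ℝ (Fin d) → ℝ)
    (r : EuclideanSpace ℝ (Fin d) → ℝ) (rn : ℕ → EuclideanSpace ℝ (Fin d) → ℝ)
    (hf : ConcaveOn ℝ Set.univ f) (hfL : GloballyLipschitz d f)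
    (hfn : ∀ n, ConcaveOn ℝ Set.univ (fn n)) (hfnL : ∀ n, GloballyLipschitz d (fn n))
    (hmono : ∀ n x, fn n x ≤ fn (n + 1) x)
    (hr : IsRecessionFn d f r) (hrn : ∀ n, IsRecessionFn d (fn n) (rn n)) :
    (∀ ε : ℝ, 0 < ε → ∃ N : ℕ, ∀ n ≥ N, ∀ x, |fn n x - f x| ≤ ε * (1 + ‖x‖)) ↔
      ((∀ x, Filter.Tendsto (fun n => fn n x) Filter.atTop (nhds (f x))) ∧
        (∀ ε : ℝ, 0 < ε → ∃ N : ℕ, ∀ n ≥ N, ∀ x, |rn n x - r x| ≤ ε * ‖x‖)) := by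
  obtain ⟨K, hK⟩ := hfL.exists_lipschitzWith
  refine ⟨fun hG => ⟨TendstoInGNorm.tendsto_apply hG, TendstoInGNorm.tendstoInCNorm hG hrn hr⟩,
    fun ⟨hpt, hC⟩ => ?_⟩
  exact tendstoInGNorm_of_monotone hfn (fun n => (hfnL n).continuous) hf hK.continuous
    (hK.of_tendsto_smul_div hr).continuous hrn hr
    (fun x => monotone_nat_of_le_succ (hmono · x)) hpt hC

/-- For an increasing sequence of globally Lipschitz concave functions `f_n` and a globally
Lipschitz concave `f`, convergence `f_n → f` in the G-norm holds iff `f_n → f` pointwise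
and the recession functions converge in the C-norm. -/
theorem stmt_10 (d : ℕ) (hd : 1 ≤ d)
    (f : EuclideanSpace ℝ (Fin d) → ℝ) (fn : ℕ → EuclideanSpace ℝ (Fin d) → ℝ)
    (r : EuclideanSpace ℝ (Fin d) → ℝ) (rn : ℕ → EuclideanSpace ℝ (Fin d) → ℝ)
    (hf : ConcaveOn ℝ Set.univ f) (hfL : GloballyLipschitz d f)
    (hfn : ∀ n, ConcaveOn ℝ Set.univ (fn n)) (hfnL : ∀ n, GloballyLipschitz d (fn n))
    (hmono : ∀ n x, fn n x ≤ fn (n + 1) x)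
    (hr : IsRecessionFn d f r) (hrn : ∀ n, IsRecessionFn d (fn n) (rn n)) :
    (∀ ε : ℝ, 0 < ε → ∃ N : ℕ, ∀ n ≥ N, ∀ x, |fn n x - f x| ≤ ε * (1 + ‖x‖)) ↔
      ((∀ x, Filter.Tendsto (fun n => fn n x) Filter.atTop (nhds (f x))) ∧
        (∀ ε : ℝ, 0 < ε → ∃ N : ℕ, ∀ n ≥ N, ∀ x, |rn n x - r x| ≤ ε * ‖x‖)) :=
  stmt_10_general d f fn r rn hf hfL hfn hfnL hmono hr hrn
end
end

section
/- Let {Ψ_n} be a sequence of continuous conical concave functions E → ℝ with Ψ_n(x) ≤ Ψ_{n+1}(x) for all n and x. Then there exists a continuous conical concave function Ψ : E → ℝ such that Ψ_n → Ψ in the C-norm (equivalently, uniformly on the closed unit ball). -/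
/-!
A conical concave function satisfies `Ψ x + Ψ (-x) ≤ 2 Ψ 0 = 0`, so an increasing sequence `Ψₙ`
is bounded above pointwise by `-Ψ₀ (-x)` and has a pointwise limit `Ψ`. Conicity and concavity
are closed conditions, so `Ψ` inherits them, and a finite concave function on a finite-dimensional
space is continuous. Dini's theorem gives uniform convergence on the compact unit sphere, which
homogeneity turns into convergence in the C-norm.
-/

open Set

noncomputable section

open Filter Topology Metric

section PositivelyHomogeneous

variable {E : Type*} [NormedAddCommGroup E] [NormedSpace ℝ E]

lemma apply_zero_of_posHomog {f : E → ℝ} (hf : ∀ c : ℝ, 0 ≤ c → ∀ x, f (c • x) = c * f x) :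
    f 0 = 0 := by
  simpa using hf 0 le_rfl 0

lemma le_neg_apply_neg_of_concaveOn {f : E → ℝ} (hcv : ConcaveOn ℝ univ f)
    (hf : ∀ c : ℝ, 0 ≤ c → ∀ x, f (c • x) = c * f x) (x : E) :
    f x ≤ -f (-x) := by
  have hmid := hcv.2 (mem_univ x) (mem_univ (-x)) (by norm_num : (0 : ℝ) ≤ 1 / 2)
    (by norm_num : (0 : ℝ) ≤ 1 / 2) (by norm_num)
  rw [smul_neg, add_neg_cancel, apply_zero_of_posHomog hf, smul_eq_mul, smul_eq_mul] at hmid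
  linarith

lemma isClosed_setOf_posHomog :
    IsClosed {f : E → ℝ | ∀ c : ℝ, 0 ≤ c → ∀ x, f (c • x) = c * f x} := by
  simp only [ofPred_forall]
  exact isClosed_iInter fun c => isClosed_iInter fun _ => isClosed_iInter fun x =>
    isClosed_eq (continuous_apply _) (continuous_const.mul (continuous_apply x))

lemma dist_le_mul_norm_of_forall_sphere {f g : E → ℝ}
    (hf : ∀ c : ℝ, 0 ≤ c → ∀ x, f (c • x) = c * f x)
    (hg : ∀ c : ℝ, 0 ≤ c → ∀ x, g (c • x) = c * g x) {ε : ℝ}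
    (hsphere : ∀ u ∈ sphere (0 : E) 1, dist (f u) (g u) ≤ ε) (x : E) :
    dist (f x) (g x) ≤ ε * ‖x‖ := by
  rcases eq_or_ne x 0 with rfl | hx
  · simp [apply_zero_of_posHomog hf, apply_zero_of_posHomog hg]
  have hnorm : 0 < ‖x‖ := norm_pos_iff.2 hx
  set u := ‖x‖⁻¹ • x
  have hu : u ∈ sphere (0 : E) 1 := by
    simp [u, norm_smul, hnorm.ne']
  have hxu : x = ‖x‖ • u := by
    simp [u, smul_smul, hnorm.ne']
  calc dist (f x) (g x) = ‖x‖ * dist (f u) (g u) := by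
        rw [hxu, hf _ hnorm.le, hg _ hnorm.le, Real.dist_eq, Real.dist_eq, ← mul_sub, abs_mul,
          abs_norm, norm_smul, norm_norm, mem_sphere_zero_iff_norm.1 hu, mul_one]
    _ ≤ ε * ‖x‖ := by
        rw [mul_comm]; exact mul_le_mul_of_nonneg_right (hsphere u hu) hnorm.le

lemma ConcaveOn.continuous_of_univ [FiniteDimensional ℝ E] {f : E → ℝ}
    (hf : ConcaveOn ℝ univ f) : Continuous f :=
  continuousOn_univ.1 (hf.continuousOn isOpen_univ)

end PositivelyHomogeneous

theorem stmt_12_general (d : ℕ)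
    (Ψn : ℕ → EuclideanSpace ℝ (Fin d) → ℝ)
    (hcon : ∀ n, Conical d (Ψn n))
    (hcv : ∀ n, ConcaveOn ℝ Set.univ (Ψn n))
    (hmono : ∀ n x, Ψn n x ≤ Ψn (n + 1) x) :
    ∃ Ψ : EuclideanSpace ℝ (Fin d) → ℝ,
      Continuous Ψ ∧ Conical d Ψ ∧ ConcaveOn ℝ Set.univ Ψ ∧
        ∀ ε : ℝ, 0 < ε → ∃ N : ℕ, ∀ n ≥ N, ∀ x, |Ψn n x - Ψ x| ≤ ε * ‖x‖ := by
  have hΨn_mono : Monotone Ψn := monotone_nat_of_le_succ fun n x => hmono n x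
  have hbdd (x) : BddAbove (range (Ψn · x)) := by
    refine ⟨-Ψn 0 (-x), forall_mem_range.2 fun n => ?_⟩
    linarith [le_neg_apply_neg_of_concaveOn (hcv n) (hcon n) x, hΨn_mono (Nat.zero_le n) (-x)]
  set Ψ := fun x => ⨆ n, Ψn n x
  have htend (x) : Tendsto (Ψn · x) atTop (𝓝 (Ψ x)) :=
    tendsto_atTop_ciSup (fun _ _ h => hΨn_mono h x) (hbdd x)
  have hlim : Tendsto Ψn atTop (𝓝 Ψ) := tendsto_pi_nhds.2 htend
  have hconΨ : Conical d Ψ :=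
    isClosed_setOf_posHomog.mem_of_tendsto hlim (Eventually.of_forall hcon)
  have hcvΨ : ConcaveOn ℝ univ Ψ :=
    isClosed_setOfPred_concaveOn.mem_of_tendsto hlim (Eventually.of_forall hcv)
  refine ⟨Ψ, hcvΨ.continuous_of_univ, hconΨ, hcvΨ, fun ε hε => ?_⟩
  have hunif : TendstoUniformlyOn Ψn Ψ atTop (sphere 0 1) :=
    Monotone.tendstoUniformlyOn_of_forall_tendsto (isCompact_sphere 0 1)
      (fun n => (hcv n).continuous_of_univ.continuousOn) (fun x _ _ _ h => hΨn_mono h x)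
      hcvΨ.continuous_of_univ.continuousOn (fun x _ => htend x)
  obtain ⟨N, hN⟩ := (tendstoUniformlyOn_iff.1 hunif ε hε).exists_forall_of_atTop
  refine ⟨N, fun n hn x => ?_⟩
  rw [← Real.dist_eq, dist_comm]
  exact dist_le_mul_norm_of_forall_sphere hconΨ (hcon n) (fun u hu => (hN n hn u hu).le) x

/-- Every increasing sequence of continuous conical concave functions converges in the
C-norm to a continuous conical concave function. -/
theorem stmt_12 (d : ℕ) (hd : 1 ≤ d)
    (Ψn : ℕ → EuclideanSpace ℝ (Fin d) → ℝ)
    (hc : ∀ n, Continuous (Ψn n)) (hcon : ∀ n, Conical d (Ψn n))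
    (hcv : ∀ n, ConcaveOn ℝ Set.univ (Ψn n))
    (hmono : ∀ n x, Ψn n x ≤ Ψn (n + 1) x) :
    ∃ Ψ : EuclideanSpace ℝ (Fin d) → ℝ,
      Continuous Ψ ∧ Conical d Ψ ∧ ConcaveOn ℝ Set.univ Ψ ∧
        ∀ ε : ℝ, 0 < ε → ∃ N : ℕ, ∀ n ≥ N, ∀ x, |Ψn n x - Ψ x| ≤ ε * ‖x‖ :=
  stmt_12_general d Ψn hcon hcv hmono
end
end

section
/- Let f₁, f₂ : E → ℝ be globally Lipschitz concave functions with Legendre–Fenchel transforms g₁ = f₁^∨ and g₂ = f₂^∨, and let ε > 0 and c ∈ ℝ. Then |f₁(x) − f₂(x)| ≤ ε(c + ‖x‖) for all x ∈ E if and only if for all y ∈ E both g₂(y) ≤ sup_{‖z‖ ≤ ε} g₁(y − z) + εc and g₁(y) ≤ sup_{‖z‖ ≤ ε} g₂(y − z) + εc hold (suprema and inequalities taken in ℝ ∪ {−∞}). -/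
open Set

noncomputable section

/-- The (concave) Legendre–Fenchel transform `f^∨(y) = inf_x (⟪y,x⟫ − f x)`, valued in
`ℝ ∪ {−∞} ⊆ EReal`. -/
noncomputable def LFdual (d : ℕ) (f : EuclideanSpace ℝ (Fin d) → ℝ)
    (y : EuclideanSpace ℝ (Fin d)) : EReal :=
  ⨅ x : EuclideanSpace ℝ (Fin d), (((inner ℝ y x : ℝ) - f x : ℝ) : EReal)

/-!
The forward direction is a separation argument: if `r ≤ f₂^∨(y)` then the convex function
`x ↦ ⟪y, x⟫ - f₁ x - r + εc` lies above `-ε‖x‖`, so Hahn–Banach (separating its epigraph from the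
strict hypograph of `-ε‖·‖`) yields a linear minorant `⟪z, ·⟫` with `‖z‖ ≤ ε`, which says
`f₁^∨(y - z) ≥ r - εc`. For the converse, evaluate the dual inequality at a supergradient `y` of
`f₂` at `x`, where `f₂^∨(y) = ⟪y, x⟫ - f₂ x`, and bound `f₁^∨(y - z) ≤ ⟪y - z, x⟫ - f₁ x`.
Concave functions on `ℝ^d` are continuous, so supergradients exist everywhere.
-/

open scoped RealInnerProductSpace

section Separation

variable {E : Type*} [NormedAddCommGroup E] [InnerProductSpace ℝ E] [CompleteSpace E]

lemma StrongDual.exists_apply_prod_eq_inner_add (L : StrongDual ℝ (E × ℝ)) :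
    ∃ w : E, ∀ x t, L (x, t) = ⟪w, x⟫ + t * L (0, 1) := by
  refine ⟨(InnerProductSpace.toDual ℝ E).symm (L.comp (ContinuousLinearMap.inl ℝ E ℝ)),
    fun x t => ?_⟩
  have hsplit : (x, t) = (x, (0 : ℝ)) + t • ((0 : E), (1 : ℝ)) := by ext <;> simp
  rw [InnerProductSpace.toDual_symm_apply, hsplit, map_add, map_smul, smul_eq_mul]
  rfl

theorem ConcaveOn.exists_affine_between {k : E → ℝ} (hk : ConcaveOn ℝ univ k)
    (hkc : Continuous k) {D : Set (E × ℝ)} (hD : Convex ℝ D) (hDne : D.Nonempty)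
    (hkD : ∀ p ∈ D, k p.1 ≤ p.2) :
    ∃ (w : E) (b : ℝ), (∀ x, k x ≤ ⟪w, x⟫ + b) ∧ ∀ p ∈ D, ⟪w, p.1⟫ + b ≤ p.2 := by
  have hCconv : Convex ℝ {p : E × ℝ | p.2 < k p.1} := by
    simpa using hk.convex_strict_hypograph
  have hCopen : IsOpen {p : E × ℝ | p.2 < k p.1} :=
    isOpen_lt continuous_snd (hkc.comp continuous_fst)
  have hdisj : Disjoint {p : E × ℝ | p.2 < k p.1} D :=
    Set.disjoint_left.2 fun p hp hpD => (hkD p hpD).not_gt hp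
  obtain ⟨L, u, hLC, hLD⟩ := geometric_hahn_banach_open hCconv hCopen hD hdisj
  obtain ⟨w, hw⟩ := L.exists_apply_prod_eq_inner_add
  set σ := L (0, 1)
  have hC : ∀ x t, t < k x → ⟪w, x⟫ + t * σ < u := fun x t ht => hw x t ▸ hLC (x, t) ht
  have hD' : ∀ p ∈ D, u ≤ ⟪w, p.1⟫ + p.2 * σ := fun p hp => hw p.1 p.2 ▸ hLD p hp
  obtain ⟨p, hp⟩ := hDne
  have hσ : 0 < σ := by
    by_contra! hσ
    have hlow : min (k p.1 - 1) p.2 * σ ≥ p.2 * σ :=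
      mul_le_mul_of_nonpos_right (min_le_right _ _) hσ
    have := hC p.1 (min (k p.1 - 1) p.2) ((min_le_left _ _).trans_lt (by linarith))
    linarith [hD' p hp]
  have hk_le : ∀ x, k x ≤ (u - ⟪w, x⟫) / σ := fun x =>
    le_of_forall_lt fun t ht => by rw [lt_div_iff₀ hσ]; linarith [hC x t ht]
  have haffine : ∀ x, ⟪-σ⁻¹ • w, x⟫ + u / σ = (u - ⟪w, x⟫) / σ := fun x => by
    rw [real_inner_smul_left]
    field_simp
    ring
  refine ⟨-σ⁻¹ • w, u / σ, fun x => haffine x ▸ hk_le x, fun q hq => ?_⟩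
  rw [haffine, div_le_iff₀ hσ]
  linarith [hD' q hq]

theorem ConcaveOn.exists_le_add_inner_sub {f : E → ℝ} (hf : ConcaveOn ℝ univ f)
    (hfc : Continuous f) (x₀ : E) : ∃ y : E, ∀ x, f x ≤ f x₀ + ⟪y, x - x₀⟫ := by
  obtain ⟨y, b, hle, hge⟩ := hf.exists_affine_between hfc (convex_singleton (x₀, f x₀))
    (singleton_nonempty _) (by simp)
  refine ⟨y, fun x => ?_⟩
  rw [inner_sub_right]
  linarith [hle x, hge _ rfl]

theorem ConvexOn.exists_inner_le_of_neg_mul_norm_le {h : E → ℝ} (hh : ConvexOn ℝ univ h)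
    {ε : ℝ} (hε : 0 ≤ ε) (hlb : ∀ x, -(ε * ‖x‖) ≤ h x) :
    ∃ z : E, ‖z‖ ≤ ε ∧ ∀ x, ⟪z, x⟫ ≤ h x := by
  have hk : ConcaveOn ℝ univ fun x : E => -(ε * ‖x‖) :=
    ((convexOn_norm convex_univ).smul hε).neg
  obtain ⟨z, b, hle, hge⟩ := hk.exists_affine_between (by fun_prop)
    (D := {p | h p.1 ≤ p.2}) (by simpa using hh.convex_epigraph) ⟨(0, h 0), le_refl (h 0)⟩
    fun p hp => (hlb p.1).trans hp
  have hb : 0 ≤ b := by simpa using hle 0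
  refine ⟨z, ?_, fun x => by linarith [hge (x, h x) (le_refl (h x))]⟩
  by_contra! hzε
  have hgap : 0 < ‖z‖ * (‖z‖ - ε) := mul_pos (hε.trans_lt hzε) (by linarith)
  -- the affine minorant `⟪z, ·⟫ + b` of `-ε‖·‖` fails far out along `-z`
  set s := (b + 1) / (‖z‖ * (‖z‖ - ε))
  have hs : s * (‖z‖ * (‖z‖ - ε)) = b + 1 := div_mul_cancel₀ _ hgap.ne'
  have := hle (-s • z)
  rw [norm_smul, real_inner_smul_right, real_inner_self_eq_norm_sq, Real.norm_eq_abs,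
    abs_neg, abs_of_nonneg (by positivity)] at this
  nlinarith

end Separation

section LFdual

variable {d : ℕ}

lemma coe_le_LFdual_iff {f : EuclideanSpace ℝ (Fin d) → ℝ} {y : EuclideanSpace ℝ (Fin d)}
    {r : ℝ} : (r : EReal) ≤ LFdual d f y ↔ ∀ x, r ≤ ⟪y, x⟫ - f x := by
  simp only [LFdual, le_iInf_iff, EReal.coe_le_coe_iff]

lemma LFdual_eq_of_le_add_inner_sub {f : EuclideanSpace ℝ (Fin d) → ℝ}
    {x₀ y : EuclideanSpace ℝ (Fin d)} (hy : ∀ x, f x ≤ f x₀ + ⟪y, x - x₀⟫) :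
    LFdual d f y = ((⟪y, x₀⟫ - f x₀ : ℝ) : EReal) :=
  le_antisymm (iInf_le _ x₀) <| coe_le_LFdual_iff.2 fun x => by
    linarith [hy x, inner_sub_right (𝕜 := ℝ) y x x₀]

theorem LFdual_le_iSup_closedBall_add_of_sub_le {f₁ f₂ : EuclideanSpace ℝ (Fin d) → ℝ}
    (h₁ : ConcaveOn ℝ univ f₁) {ε c : ℝ} (hε : 0 ≤ ε)
    (hf : ∀ x, f₁ x - f₂ x ≤ ε * (c + ‖x‖)) (y : EuclideanSpace ℝ (Fin d)) :
    LFdual d f₂ y ≤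
      (⨆ z ∈ Metric.closedBall (0 : EuclideanSpace ℝ (Fin d)) ε, LFdual d f₁ (y - z)) +
        ((ε * c : ℝ) : EReal) := by
  refine le_of_not_gt fun hlt => ?_
  obtain ⟨r, hrS, hr⟩ := EReal.exists_between_coe_real hlt
  have hr₂ := coe_le_LFdual_iff.1 hr.le
  have hconv : ConvexOn ℝ univ fun x => ⟪y, x⟫ - f₁ x - (r - ε * c) :=
    ((innerSL ℝ y).toLinearMap.convexOn convex_univ).sub h₁ |>.sub (concaveOn_const _ convex_univ)
  obtain ⟨z, hzε, hz⟩ := hconv.exists_inner_le_of_neg_mul_norm_le hε fun x => by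
    linarith [hr₂ x, hf x]
  have hr₁ : ((r - ε * c : ℝ) : EReal) ≤ LFdual d f₁ (y - z) :=
    coe_le_LFdual_iff.2 fun x => by linarith [hz x, inner_sub_left (𝕜 := ℝ) y z x]
  have hS := hr₁.trans (le_biSup (fun z => LFdual d f₁ (y - z)) (mem_closedBall_zero_iff.2 hzε))
  refine hrS.not_ge ?_
  calc (r : EReal) = ((r - ε * c : ℝ) : EReal) + ((ε * c : ℝ) : EReal) := by
        rw [← EReal.coe_add, sub_add_cancel]
    _ ≤ _ := add_le_add_left hS _

theorem sub_le_of_LFdual_le_iSup_closedBall_add {f₁ f₂ : EuclideanSpace ℝ (Fin d) → ℝ}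
    (h₂ : ConcaveOn ℝ univ f₂) {ε c : ℝ}
    (hg : ∀ y, LFdual d f₂ y ≤
      (⨆ z ∈ Metric.closedBall (0 : EuclideanSpace ℝ (Fin d)) ε, LFdual d f₁ (y - z)) +
        ((ε * c : ℝ) : EReal))
    (x : EuclideanSpace ℝ (Fin d)) : f₁ x - f₂ x ≤ ε * (c + ‖x‖) := by
  obtain ⟨y, hy⟩ := h₂.exists_le_add_inner_sub h₂.locallyLipschitz.continuous x
  have hS : (⨆ z ∈ Metric.closedBall (0 : EuclideanSpace ℝ (Fin d)) ε, LFdual d f₁ (y - z)) ≤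
      ((⟪y, x⟫ - f₁ x + ε * ‖x‖ : ℝ) : EReal) := by
    refine iSup₂_le fun z hz => (iInf_le _ x).trans (EReal.coe_le_coe_iff.2 ?_)
    have hzx : |⟪z, x⟫| ≤ ε * ‖x‖ := (abs_real_inner_le_norm z x).trans
      (mul_le_mul_of_nonneg_right (mem_closedBall_zero_iff.1 hz) (norm_nonneg x))
    linarith [inner_sub_left (𝕜 := ℝ) y z x, (abs_le.1 hzx).1]
  have := (hg y).trans (add_le_add_left hS _)
  rw [LFdual_eq_of_le_add_inner_sub hy, ← EReal.coe_add, EReal.coe_le_coe_iff] at this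
  linarith

end LFdual

theorem stmt_13_general (d : ℕ)
    (f₁ f₂ : EuclideanSpace ℝ (Fin d) → ℝ)
    (h₁ : ConcaveOn ℝ Set.univ f₁)
    (h₂ : ConcaveOn ℝ Set.univ f₂)
    (ε c : ℝ) (hε : 0 < ε) :
    (∀ x, |f₁ x - f₂ x| ≤ ε * (c + ‖x‖)) ↔
      (∀ y : EuclideanSpace ℝ (Fin d),
        LFdual d f₂ y ≤
          (⨆ z ∈ Metric.closedBall (0 : EuclideanSpace ℝ (Fin d)) ε,
            LFdual d f₁ (y - z)) + ((ε * c : ℝ) : EReal) ∧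
        LFdual d f₁ y ≤
          (⨆ z ∈ Metric.closedBall (0 : EuclideanSpace ℝ (Fin d)) ε,
            LFdual d f₂ (y - z)) + ((ε * c : ℝ) : EReal)) := by
  constructor
  · intro hf y
    exact ⟨LFdual_le_iSup_closedBall_add_of_sub_le h₁ hε.le (fun x => (abs_le.1 (hf x)).2) y,
      LFdual_le_iSup_closedBall_add_of_sub_le h₂ hε.le
        (fun x => by linarith [(abs_le.1 (hf x)).1]) y⟩
  · intro hg x
    have h₁₂ := sub_le_of_LFdual_le_iSup_closedBall_add h₂ (fun y => (hg y).1) x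
    have h₂₁ := sub_le_of_LFdual_le_iSup_closedBall_add h₁ (fun y => (hg y).2) x
    exact abs_le.2 ⟨by linarith, h₁₂⟩

/-- For globally Lipschitz concave `f₁, f₂` with duals `g₁, g₂`, and `ε > 0`, `c ∈ ℝ`:
`|f₁ − f₂| ≤ ε (c + ‖·‖)` everywhere iff the two sup-convolution inequalities
`g₂ ≤ (g₁ ⊞ ι_{B(0,ε)}) + εc` and `g₁ ≤ (g₂ ⊞ ι_{B(0,ε)}) + εc` hold everywhere. -/
theorem stmt_13 (d : ℕ) (hd : 1 ≤ d)
    (f₁ f₂ : EuclideanSpace ℝ (Fin d) → ℝ)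
    (h₁ : ConcaveOn ℝ Set.univ f₁) (h₁L : GloballyLipschitz d f₁)
    (h₂ : ConcaveOn ℝ Set.univ f₂) (h₂L : GloballyLipschitz d f₂)
    (ε c : ℝ) (hε : 0 < ε) :
    (∀ x, |f₁ x - f₂ x| ≤ ε * (c + ‖x‖)) ↔
      (∀ y : EuclideanSpace ℝ (Fin d),
        LFdual d f₂ y ≤
          (⨆ z ∈ Metric.closedBall (0 : EuclideanSpace ℝ (Fin d)) ε,
            LFdual d f₁ (y - z)) + ((ε * c : ℝ) : EReal) ∧
        LFdual d f₁ y ≤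
          (⨆ z ∈ Metric.closedBall (0 : EuclideanSpace ℝ (Fin d)) ε,
            LFdual d f₂ (y - z)) + ((ε * c : ℝ) : EReal)) :=
  stmt_13_general d f₁ f₂ h₁ h₂ ε c hε
end
end

section
/- Let f : E → ℝ be globally Lipschitz concave with recession function Ψ = rec(f), and suppose C := sup_{x∈E} |f(x) − Ψ(x)| is finite. Let {Ψ_n} be a sequence of continuous conical concave functions with Ψ_n ≤ Ψ_{n+1} pointwise, converging to Ψ in the C-norm. Define f_n(x) = min{f(x), Ψ_n(x) + C}. Then each f_n is concave, f_n ≤ f_{n+1} pointwise, rec(f_n) = Ψ_n, |f_n(x) − Ψ_n(x)| ≤ C for all x, and f_n → f in the G-norm. -/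
open Set

noncomputable section

/-- Given a globally Lipschitz concave `f` with recession function `Ψ` at bounded distance
`C = sup |f − Ψ|`, and an increasing sequence `Ψ_n` of continuous conical concave functions
converging to `Ψ` in the C-norm, the functions `f_n = min{f, Ψ_n + C}` are concave,
increasing, have recession functions `Ψ_n`, satisfy `|f_n − Ψ_n| ≤ C`, and converge to `f`
in the G-norm. -/
theorem stmt_14 (d : ℕ) (hd : 1 ≤ d)
    (f Ψ : EuclideanSpace ℝ (Fin d) → ℝ) (Ψn : ℕ → EuclideanSpace ℝ (Fin d) → ℝ)
    (C : ℝ)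
    (hf : ConcaveOn ℝ Set.univ f) (hfL : GloballyLipschitz d f)
    (hΨrec : IsRecessionFn d f Ψ)
    (hbdd : BddAbove (Set.range fun x => |f x - Ψ x|))
    (hC : C = sSup (Set.range fun x => |f x - Ψ x|))
    (hΨnc : ∀ n, Continuous (Ψn n)) (hΨncon : ∀ n, Conical d (Ψn n))
    (hΨncv : ∀ n, ConcaveOn ℝ Set.univ (Ψn n))
    (hmono : ∀ n x, Ψn n x ≤ Ψn (n + 1) x)
    (hconv : ∀ ε : ℝ, 0 < ε → ∃ N : ℕ, ∀ n ≥ N, ∀ x, |Ψn n x - Ψ x| ≤ ε * ‖x‖) :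
    (∀ n, ConcaveOn ℝ Set.univ (fun x => min (f x) (Ψn n x + C))) ∧
    (∀ n x, min (f x) (Ψn n x + C) ≤ min (f x) (Ψn (n + 1) x + C)) ∧
    (∀ n, IsRecessionFn d (fun x => min (f x) (Ψn n x + C)) (Ψn n)) ∧
    (∀ n x, |min (f x) (Ψn n x + C) - Ψn n x| ≤ C) ∧
    (∀ ε : ℝ, 0 < ε → ∃ N : ℕ, ∀ n ≥ N, ∀ x,
      |min (f x) (Ψn n x + C) - f x| ≤ ε * (1 + ‖x‖)) := by
  have hCle : ∀ x, |f x - Ψ x| ≤ C := fun x => hC ▸ le_csSup hbdd ⟨x, rfl⟩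
  have hC0 : 0 ≤ C := le_trans (abs_nonneg _) (hCle 0)
  have hmono' : ∀ x, Monotone fun m => Ψn m x := fun x =>
    monotone_nat_of_le_succ fun m => hmono m x
  have htend : ∀ x, Filter.Tendsto (fun m => Ψn m x) Filter.atTop (nhds (Ψ x)) := by
    intro x
    rw [Metric.tendsto_atTop]
    intro ε hε
    have hpos : 0 < ε / (‖x‖ + 1) := by positivity
    obtain ⟨N, hN⟩ := hconv _ hpos
    refine ⟨N, fun n hn => ?_⟩
    have h1 := hN n hn x
    have h2 : ε / (‖x‖ + 1) * ‖x‖ < ε := by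
      rw [div_mul_eq_mul_div, div_lt_iff₀ (by positivity)]
      nlinarith [norm_nonneg x]
    rw [Real.dist_eq]
    linarith
  have hΨle : ∀ n x, Ψn n x ≤ Ψ x := fun n x =>
    ge_of_tendsto (htend x) (Filter.eventually_atTop.2 ⟨n, fun m hm => hmono' x hm⟩)
  refine ⟨?_, ?_, ?_, ?_, ?_⟩
  · intro n
    exact hf.inf ((hΨncv n).add (concaveOn_const C convex_univ))
  · intro n x
    exact min_le_min le_rfl (by linarith [hmono n x])
  · intro n x
    have h1 := hΨrec x
    have h2 : Filter.Tendsto (fun t : ℝ => Ψn n x + C / t) Filter.atTop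
        (nhds (Ψn n x)) := by
      simpa using tendsto_const_nhds.add (Filter.Tendsto.div_atTop
        (tendsto_const_nhds (x := C)) Filter.tendsto_id)
    have h3 := h1.min h2
    rw [min_eq_right (hΨle n x)] at h3
    refine h3.congr' ?_
    filter_upwards [Filter.eventually_gt_atTop (0 : ℝ)] with t ht
    have hne : t ≠ 0 := ne_of_gt ht
    rw [hΨncon n t ht.le x]
    rw [← min_div_div_right ht.le]
    congr 1
    field_simp
  · intro n x
    obtain ⟨h1a, h1b⟩ := abs_le.mp (hCle x)
    have h2 := hΨle n x
    have hlow : Ψn n x - C ≤ min (f x) (Ψn n x + C) :=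
      le_min (by linarith) (by linarith)
    rw [abs_le]
    constructor <;> linarith [min_le_right (f x) (Ψn n x + C)]
  · intro ε hε
    obtain ⟨N, hN⟩ := hconv ε hε
    refine ⟨N, fun n hn x => ?_⟩
    have h1 := abs_le.mp (hCle x)
    have h2 := abs_le.mp (hN n hn x)
    have h3 := norm_nonneg x
    rcases le_total (f x) (Ψn n x + C) with h | h
    · rw [min_eq_left h, sub_self, abs_zero]; nlinarith
    · rw [min_eq_right h, abs_of_nonpos (by linarith)]
      nlinarith
end
end

section
/- Let f : E → ℝ be a globally Lipschitz concave function. Then there exists a continuous, conical, concave function g : E → ℝ (the one-sided directional derivative of f at 0) such that for every x ∈ E, (f(tx) − f(0))/t → g(x) as t → 0⁺, and the convergence is uniform on the unit sphere: for every ε > 0 there exists δ > 0 such that |(f(tx) − f(0))/t − g(x)| ≤ ε for all t ∈ (0, δ] and all x ∈ E with ‖x‖ = 1. -/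
open Set

noncomputable section

/-- For a globally Lipschitz concave `f`, the one-sided directional derivative at `0`
exists in every direction; it defines a continuous conical concave function `g`, and the
difference quotients converge to `g` uniformly on the unit sphere. -/
theorem stmt_19 (d : ℕ) (hd : 1 ≤ d)
    (f : EuclideanSpace ℝ (Fin d) → ℝ)
    (hf : ConcaveOn ℝ Set.univ f) (hfL : GloballyLipschitz d f) :
    ∃ g : EuclideanSpace ℝ (Fin d) → ℝ,
      Continuous g ∧ Conical d g ∧ ConcaveOn ℝ Set.univ g ∧
      (∀ x, Filter.Tendsto (fun t : ℝ => (f (t • x) - f 0) / t)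
        (nhdsWithin 0 (Set.Ioi 0)) (nhds (g x))) ∧
      (∀ ε : ℝ, 0 < ε → ∃ δ : ℝ, 0 < δ ∧ ∀ t ∈ Set.Ioc (0 : ℝ) δ,
        ∀ x : EuclideanSpace ℝ (Fin d), ‖x‖ = 1 →
          |(f (t • x) - f 0) / t - g x| ≤ ε) := by
  classical
  obtain ⟨C, hC, hfC⟩ := hfL
  set q : ℝ → EuclideanSpace ℝ (Fin d) → ℝ := fun t x => (f (t • x) - f 0) / t with hq
  -- the difference quotient is antitone in t
  have hmono : ∀ (x : EuclideanSpace ℝ (Fin d)) {s t : ℝ}, 0 < s → s ≤ t → q t x ≤ q s x := by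
    intro x s t hs hst
    have ht : 0 < t := lt_of_lt_of_le hs hst
    have hb : (0:ℝ) ≤ 1 - s / t := by
      have : s / t ≤ 1 := (div_le_one ht).2 hst
      linarith
    have hcon := hf.2 (mem_univ (t • x)) (mem_univ (0 : EuclideanSpace ℝ (Fin d)))
      (show (0:ℝ) ≤ s / t by positivity) hb (show s / t + (1 - s / t) = 1 by ring)
    simp only [smul_smul, smul_zero, add_zero, smul_eq_mul,
      div_mul_cancel₀ s ht.ne'] at hcon
    rw [hq]
    simp only
    rw [div_le_div_iff₀ ht hs]
    have h3 : s * f (t • x) + (t - s) * f 0 ≤ t * f (s • x) := by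
      have h2 := mul_le_mul_of_nonneg_left hcon ht.le
      have expand : t * (s / t * f (t • x) + (1 - s / t) * f 0)
          = s * f (t • x) + (t - s) * f 0 := by
        field_simp
      rw [expand] at h2
      exact h2
    nlinarith [h3]
  -- bound on the quotient
  have hbd : ∀ (x : EuclideanSpace ℝ (Fin d)) {t : ℝ}, 0 < t → |q t x| ≤ C * ‖x‖ := by
    intro x t ht
    have h1 := hfC (t • x) 0
    rw [sub_zero, norm_smul, Real.norm_of_nonneg ht.le] at h1
    rw [hq]
    simp only
    rw [abs_div, abs_of_pos ht, div_le_iff₀ ht]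
    have : f (t • x) - f 0 = f (t • x) - f 0 := rfl
    calc |f (t • x) - f 0| ≤ C * (t * ‖x‖) := h1
      _ = C * ‖x‖ * t := by ring
  -- Lipschitz in x
  have hqlip : ∀ {t : ℝ}, 0 < t → ∀ x y : EuclideanSpace ℝ (Fin d), |q t x - q t y| ≤ C * ‖x - y‖ := by
    intro t ht x y
    have heq : q t x - q t y = (f (t • x) - f (t • y)) / t := by rw [hq]; ring
    have h1 := hfC (t • x) (t • y)
    rw [← smul_sub, norm_smul, Real.norm_of_nonneg ht.le] at h1
    rw [heq, abs_div, abs_of_pos ht, div_le_iff₀ ht]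
    calc |f (t • x) - f (t • y)| ≤ C * (t * ‖x - y‖) := h1
      _ = C * ‖x - y‖ * t := by ring
  have hne : ∀ x : EuclideanSpace ℝ (Fin d), ((fun t => q t x) '' Ioi 0).Nonempty :=
    fun x => ⟨q 1 x, ⟨1, mem_Ioi.2 one_pos, rfl⟩⟩
  have hbdd : ∀ x : EuclideanSpace ℝ (Fin d), BddAbove ((fun t => q t x) '' Ioi 0) := by
    intro x
    refine ⟨C * ‖x‖, ?_⟩
    rintro _ ⟨t, ht, rfl⟩
    exact (abs_le.1 (hbd x ht)).2
  set g : EuclideanSpace ℝ (Fin d) → ℝ := fun x => sSup ((fun t => q t x) '' Ioi 0) with hg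
  have hle : ∀ (x : EuclideanSpace ℝ (Fin d)) {t : ℝ}, 0 < t → q t x ≤ g x :=
    fun x t ht => le_csSup (hbdd x) ⟨t, ht, rfl⟩
  have hex : ∀ (x : EuclideanSpace ℝ (Fin d)) (a : ℝ), a < g x → ∃ t, 0 < t ∧ a < q t x := by
    intro x a ha
    obtain ⟨_, ⟨t, ht, rfl⟩, h⟩ := exists_lt_of_lt_csSup (hne x) ha
    exact ⟨t, ht, h⟩
  -- pointwise convergence
  have htend : ∀ x : EuclideanSpace ℝ (Fin d), Filter.Tendsto (fun t => q t x)
      (nhdsWithin 0 (Ioi 0)) (nhds (g x)) := by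
    intro x
    rw [tendsto_order]
    constructor
    · intro a ha
      obtain ⟨t₀, ht₀, hat⟩ := hex x a ha
      filter_upwards [Ioc_mem_nhdsGT_of_mem (show (0:ℝ) ∈ Ico 0 t₀ by simp [ht₀])] with t ht
      exact hat.trans_le (hmono x ht.1 ht.2)
    · intro a ha
      filter_upwards [self_mem_nhdsWithin] with t ht
      exact (hle x ht).trans_lt ha
  -- g is Lipschitz
  have hglip : ∀ x y : EuclideanSpace ℝ (Fin d), g x ≤ g y + C * ‖x - y‖ := by
    intro x y
    apply csSup_le (hne x)
    rintro _ ⟨t, ht, rfl⟩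
    have h1 := (abs_le.1 (hqlip ht x y)).2
    have h2 := hle y ht
    linarith
  have hgabs : ∀ x y : EuclideanSpace ℝ (Fin d), |g x - g y| ≤ C * ‖x - y‖ := by
    intro x y
    rw [abs_le]
    refine ⟨?_, ?_⟩
    · have := hglip y x
      rw [norm_sub_rev] at this
      linarith
    · have := hglip x y
      linarith
  have hcont : Continuous g := by
    have : LipschitzWith (Real.toNNReal C) g := by
      apply LipschitzWith.of_dist_le_mul
      intro x y
      rw [Real.dist_eq, dist_eq_norm, Real.coe_toNNReal C hC]
      exact hgabs x y
    exact this.continuous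
  -- g 0 = 0
  have hg0 : g 0 = 0 := by
    have hq0 : (fun t : ℝ => q t (0 : EuclideanSpace ℝ (Fin d))) = fun _ => (0 : ℝ) := by
      funext t; simp [hq]
    have h := htend 0
    rw [hq0] at h
    exact tendsto_nhds_unique h tendsto_const_nhds
  -- conical
  have hconical : Conical d g := by
    intro c hc x
    rcases hc.eq_or_lt with rfl | hc
    · simp [hg0]
    · have hmap : Filter.Tendsto (fun t : ℝ => t * c)
          (nhdsWithin 0 (Ioi 0)) (nhdsWithin 0 (Ioi 0)) := by
        rw [tendsto_nhdsWithin_iff]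
        constructor
        · have h0 : Filter.Tendsto (fun t : ℝ => t * c) (nhds 0) (nhds (0 * c)) :=
            (continuous_id.mul continuous_const).tendsto 0
          rw [zero_mul] at h0
          exact h0.mono_left nhdsWithin_le_nhds
        · filter_upwards [self_mem_nhdsWithin] with t ht
          exact mul_pos ht hc
      have h1 : Filter.Tendsto (fun t : ℝ => c * q (t * c) x)
          (nhdsWithin 0 (Ioi 0)) (nhds (c * g x)) := ((htend x).comp hmap).const_mul c
      have heq : ∀ᶠ t in nhdsWithin (0:ℝ) (Ioi 0), c * q (t * c) x = q t (c • x) := by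
        filter_upwards [self_mem_nhdsWithin] with t ht
        rw [hq]
        simp only [smul_smul]
        have ht' : t ≠ 0 := ne_of_gt ht
        have hc' : c ≠ 0 := ne_of_gt hc
        field_simp
      exact tendsto_nhds_unique (htend (c • x)) (Filter.Tendsto.congr' heq h1)
  -- concave
  have hconc : ConcaveOn ℝ Set.univ g := by
    refine ⟨convex_univ, fun x _ y _ a b ha hb hab => ?_⟩
    simp only [smul_eq_mul]
    have hA : Filter.Tendsto (fun t => a * q t x + b * q t y)
        (nhdsWithin 0 (Ioi 0)) (nhds (a * g x + b * g y)) :=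
      ((htend x).const_mul a).add ((htend y).const_mul b)
    refine le_of_tendsto_of_tendsto hA (htend (a • x + b • y)) ?_
    filter_upwards [self_mem_nhdsWithin] with t ht
    have hc2 := hf.2 (mem_univ (t • x)) (mem_univ (t • y)) ha hb hab
    have hrw : a • (t • x) + b • (t • y) = t • (a • x + b • y) := by
      rw [smul_comm a t, smul_comm b t, ← smul_add]
    rw [hrw] at hc2
    simp only [smul_eq_mul] at hc2
    have hsum : a * q t x + b * q t y
        = (a * (f (t • x) - f 0) + b * (f (t • y) - f 0)) / t := by
      rw [hq]; ring
    have hf0 : a * f 0 + b * f 0 = f 0 := by rw [← add_mul, hab, one_mul]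
    rw [hsum, hq]
    simp only
    have ht0 : (0:ℝ) < t := ht
    rw [div_le_div_iff₀ ht0 ht0]
    have hnum : a * (f (t • x) - f 0) + b * (f (t • y) - f 0)
        ≤ f (t • (a • x + b • y)) - f 0 := by linarith
    exact mul_le_mul_of_nonneg_right hnum ht0.le
  -- uniform convergence on the sphere
  refine ⟨g, hcont, hconical, hconc, htend, ?_⟩
  intro ε hε
  have hC1 : (0:ℝ) < C + 1 := by linarith
  set r : ℝ := ε / (3 * (C + 1)) with hr
  have hrpos : 0 < r := by positivity
  have hD : ∀ x : EuclideanSpace ℝ (Fin d), ∃ t, 0 < t ∧ g x - ε / 3 < q t x := by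
    intro x
    exact hex x _ (by linarith)
  choose D hD1 hD2 using hD
  obtain ⟨F, hF⟩ := (isCompact_sphere (0:EuclideanSpace ℝ (Fin d)) 1).elim_finite_subcover
    (fun x : EuclideanSpace ℝ (Fin d) => Metric.ball x r) (fun x => Metric.isOpen_ball)
    (fun y hy => mem_iUnion.2 ⟨y, Metric.mem_ball_self hrpos⟩)
  have hx₀ : (EuclideanSpace.single (⟨0, hd⟩ : Fin d) (1:ℝ)) ∈ Metric.sphere (0:EuclideanSpace ℝ (Fin d)) 1 := by
    rw [mem_sphere_zero_iff_norm, EuclideanSpace.norm_single]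
    simp
  have hFne : F.Nonempty := by
    obtain ⟨i, hi, _⟩ := mem_iUnion₂.1 (hF hx₀)
    exact ⟨i, hi⟩
  refine ⟨F.inf' hFne D, ?_, ?_⟩
  · rw [Finset.lt_inf'_iff]
    exact fun i hi => hD1 i
  · intro t ht x hx
    obtain ⟨i, hi, hxi⟩ := mem_iUnion₂.1 (hF (mem_sphere_zero_iff_norm.2 hx))
    have hdist : ‖x - i‖ < r := by
      rw [← dist_eq_norm]
      exact Metric.mem_ball.1 hxi
    have e1 := abs_le.1 (hqlip ht.1 x i)
    have e2 := abs_le.1 (hgabs x i)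
    have e3 : q t i ≤ g i := hle i ht.1
    have htD : t ≤ D i := le_trans ht.2 (Finset.inf'_le D hi)
    have e4 : g i - ε / 3 < q t i :=
      lt_of_lt_of_le (hD2 i) (hmono i ht.1 htD)
    have e5 : C * ‖x - i‖ ≤ ε / 3 := by
      have h6 : C * ‖x - i‖ ≤ C * r := mul_le_mul_of_nonneg_left hdist.le hC
      have h7 : C * r ≤ ε / 3 := by
        have hre : r * (3 * (C + 1)) = ε := div_mul_cancel₀ _ (by positivity)
        nlinarith [hre, hrpos.le]
      linarith
    have e6 : q t x ≤ g x := hle x ht.1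
    show |q t x - g x| ≤ ε
    rw [abs_le]
    constructor
    · linarith [e1.1, e2.2]
    · linarith
end
end
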